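/- arXiv:1003.1085 — 8 statements merged into one kernel-verified Lean document; each statement's English description precedes it below -/
import Mathlib

section
/- Let f : (V, c_V) → (W, c_W) be a morphism of braided vector spaces over a field K. Then Ker(f) is a pre-categorical subspace of (V, c_V); that is, c_V(Ker(f)⊗V + V⊗Ker(f)) ⊆ Ker(f)⊗V + V⊗Ker(f) (as subspaces of V⊗V). -/
open TensorProduct LinearMap

noncomputable section

variable (K : Type*) [Field K]

section BraidedDefs

variable (V : Type*) [AddCommGroup V] [Module K V]

/-- The Yang–Baxter (braid) equation for `c : V ⊗ V → V ⊗ V`: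
`c₁ c₂ c₁ = c₂ c₁ c₂` on `(V ⊗ V) ⊗ V`, where `c₁ = c ⊗ id` and `c₂ = id ⊗ c`
(transported along the associator). -/
def YangBaxter (c : V ⊗[K] V →ₗ[K] V ⊗[K] V) : Prop :=
  (rTensor V c) ∘ₗ
      ((TensorProduct.assoc K V V V).symm.toLinearMap ∘ₗ (lTensor V c) ∘ₗ
        (TensorProduct.assoc K V V V).toLinearMap) ∘ₗ (rTensor V c)
    = ((TensorProduct.assoc K V V V).symm.toLinearMap ∘ₗ (lTensor V c) ∘ₗ
        (TensorProduct.assoc K V V V).toLinearMap) ∘ₗ (rTensor V c) ∘ₗ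
      ((TensorProduct.assoc K V V V).symm.toLinearMap ∘ₗ (lTensor V c) ∘ₗ
        (TensorProduct.assoc K V V V).toLinearMap)

variable {V}

/-- The image of `L ⊗ V` in `V ⊗ V`, for a subspace `L ≤ V`. -/
def lT (L : Submodule K V) : Submodule K (V ⊗[K] V) :=
  LinearMap.range (rTensor V L.subtype)

/-- The image of `V ⊗ L` in `V ⊗ V`, for a subspace `L ≤ V`. -/
def rT (L : Submodule K V) : Submodule K (V ⊗[K] V) :=
  LinearMap.range (lTensor V L.subtype)

/-- `L` is a pre-categorical subspace of `(V, c)`: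
`c (L⊗V + V⊗L) ⊆ L⊗V + V⊗L`. -/
def IsPreCategorical (c : V ⊗[K] V →ₗ[K] V ⊗[K] V) (L : Submodule K V) : Prop :=
  Submodule.map c (lT K L ⊔ rT K L) ≤ lT K L ⊔ rT K L

/-- `L` is a categorical subspace of `(V, c)`:
`c (L⊗V) ⊆ V⊗L` and `c (V⊗L) ⊆ L⊗V`. -/
def IsCategorical (c : V ⊗[K] V →ₗ[K] V ⊗[K] V) (L : Submodule K V) : Prop :=
  Submodule.map c (lT K L) ≤ rT K L ∧ Submodule.map c (rT K L) ≤ lT K L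

/-- A morphism of braided vector spaces `f : (V, cV) → (W, cW)`:
`cW ∘ (f ⊗ f) = (f ⊗ f) ∘ cV`. -/
def IsBraidedHom {W : Type*} [AddCommGroup W] [Module K W]
    (cV : V ⊗[K] V →ₗ[K] V ⊗[K] V) (cW : W ⊗[K] W →ₗ[K] W ⊗[K] W)
    (f : V →ₗ[K] W) : Prop :=
  cW ∘ₗ TensorProduct.map f f = TensorProduct.map f f ∘ₗ cV

end BraidedDefs

/-- A braided bialgebra `(B, m, u, Δ, ε, c)` over `K`, with all structure maps
given as `K`-linear maps. -/
structure BB (B : Type*) [AddCommGroup B] [Module K B] where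
  /-- multiplication -/
  mul : B ⊗[K] B →ₗ[K] B
  /-- unit -/
  unit : K →ₗ[K] B
  /-- comultiplication -/
  comul : B →ₗ[K] B ⊗[K] B
  /-- counit -/
  counit : B →ₗ[K] K
  /-- braiding -/
  braid : B ⊗[K] B →ₗ[K] B ⊗[K] B
  mul_assoc' : mul ∘ₗ rTensor B mul
      = mul ∘ₗ lTensor B mul ∘ₗ (TensorProduct.assoc K B B B).toLinearMap
  one_mul' : ∀ b : B, mul (unit 1 ⊗ₜ[K] b) = b
  mul_one' : ∀ b : B, mul (b ⊗ₜ[K] unit 1) = b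
  coassoc' : rTensor B comul ∘ₗ comul
      = (TensorProduct.assoc K B B B).symm.toLinearMap ∘ₗ lTensor B comul ∘ₗ comul
  counit_comul' : (TensorProduct.lid K B).toLinearMap ∘ₗ rTensor B counit ∘ₗ comul
      = LinearMap.id
  comul_counit' : (TensorProduct.rid K B).toLinearMap ∘ₗ lTensor B counit ∘ₗ comul
      = LinearMap.id
  yang_baxter' : YangBaxter K B braid
  braid_mul_left : braid ∘ₗ rTensor B mul
      = lTensor B mul ∘ₗ (TensorProduct.assoc K B B B).toLinearMap
          ∘ₗ rTensor B braid ∘ₗ (TensorProduct.assoc K B B B).symm.toLinearMap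
          ∘ₗ lTensor B braid ∘ₗ (TensorProduct.assoc K B B B).toLinearMap
  braid_mul_right : braid ∘ₗ lTensor B mul
      = rTensor B mul ∘ₗ (TensorProduct.assoc K B B B).symm.toLinearMap
          ∘ₗ lTensor B braid ∘ₗ (TensorProduct.assoc K B B B).toLinearMap
          ∘ₗ rTensor B braid ∘ₗ (TensorProduct.assoc K B B B).symm.toLinearMap
  braid_unit_left : ∀ b : B, braid (unit 1 ⊗ₜ[K] b) = b ⊗ₜ[K] unit 1
  braid_unit_right : ∀ b : B, braid (b ⊗ₜ[K] unit 1) = unit 1 ⊗ₜ[K] b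
  comul_braid_left : rTensor B comul ∘ₗ braid
      = (TensorProduct.assoc K B B B).symm.toLinearMap ∘ₗ lTensor B braid
          ∘ₗ (TensorProduct.assoc K B B B).toLinearMap ∘ₗ rTensor B braid
          ∘ₗ (TensorProduct.assoc K B B B).symm.toLinearMap ∘ₗ lTensor B comul
  comul_braid_right : lTensor B comul ∘ₗ braid
      = (TensorProduct.assoc K B B B).toLinearMap ∘ₗ rTensor B braid
          ∘ₗ (TensorProduct.assoc K B B B).symm.toLinearMap ∘ₗ lTensor B braid
          ∘ₗ (TensorProduct.assoc K B B B).toLinearMap ∘ₗ rTensor B comul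
  counit_braid_left : (TensorProduct.lid K B).toLinearMap ∘ₗ rTensor B counit ∘ₗ braid
      = (TensorProduct.rid K B).toLinearMap ∘ₗ lTensor B counit
  counit_braid_right : (TensorProduct.rid K B).toLinearMap ∘ₗ lTensor B counit ∘ₗ braid
      = (TensorProduct.lid K B).toLinearMap ∘ₗ rTensor B counit
  comul_mul' : comul ∘ₗ mul
      = TensorProduct.map mul mul
          ∘ₗ (TensorProduct.assoc K (B ⊗[K] B) B B).toLinearMap
          ∘ₗ rTensor B ((TensorProduct.assoc K B B B).symm.toLinearMap)
          ∘ₗ rTensor B (lTensor B braid)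
          ∘ₗ rTensor B ((TensorProduct.assoc K B B B).toLinearMap)
          ∘ₗ (TensorProduct.assoc K (B ⊗[K] B) B B).symm.toLinearMap
          ∘ₗ TensorProduct.map comul comul

variable {B B' : Type*} [AddCommGroup B] [Module K B] [AddCommGroup B'] [Module K B']

/-- A morphism of braided bialgebras: an algebra map, a coalgebra map and a morphism
of braided vector spaces. -/
def IsBBHom (A : BB K B) (A' : BB K B') (f : B →ₗ[K] B') : Prop :=
  f ∘ₗ A.mul = A'.mul ∘ₗ TensorProduct.map f f ∧
  f ∘ₗ A.unit = A'.unit ∧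
  A'.comul ∘ₗ f = TensorProduct.map f f ∘ₗ A.comul ∧
  A'.counit ∘ₗ f = A.counit ∧
  A'.braid ∘ₗ TensorProduct.map f f = TensorProduct.map f f ∘ₗ A.braid

/-- The space of primitive elements `P(B) = {x : Δ x = x ⊗ 1 + 1 ⊗ x}`. -/
def Prim (A : BB K B) : Submodule K B :=
  LinearMap.ker (A.comul - (TensorProduct.mk K B B).flip (A.unit 1)
    - TensorProduct.mk K B B (A.unit 1))

/-- The product `M · N` of two subspaces of a braided bialgebra `B`. -/
def mulSub (A : BB K B) (M N : Submodule K B) : Submodule K B :=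
  Submodule.map A.mul (LinearMap.range (TensorProduct.map M.subtype N.subtype))

/-- Iterated powers of a subspace `V` in `B`: `V^{·0} = K·1`, `V^{·(n+1)} = V^{·n} · V`. -/
def powSub (A : BB K B) (V : Submodule K B) : ℕ → Submodule K B
  | 0 => LinearMap.range A.unit
  | (n+1) => mulSub K A (powSub A V n) V

/-- `V` generates `B` as a `K`-algebra. -/
def GeneratesAlgebra (A : BB K B) (V : Submodule K B) : Prop :=
  (⨆ n, powSub K A V n) = ⊤

/-- A braided ideal of a braided bialgebra: a two-sided ideal which is a coideal and a
pre-categorical subspace. -/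
def IsBraidedIdeal (A : BB K B) (I : Submodule K B) : Prop :=
  mulSub K A ⊤ I ≤ I ∧ mulSub K A I ⊤ ≤ I ∧
  Submodule.map A.comul I ≤ lT K I ⊔ rT K I ∧
  I ≤ LinearMap.ker A.counit ∧
  IsPreCategorical K A.braid I

/-- The two-sided ideal `B·S·B` of `B` generated by a subspace `S`. -/
def idealGen (A : BB K B) (S : Submodule K B) : Submodule K B :=
  mulSub K A (mulSub K A ⊤ S) ⊤

/-- `(B, γ)` is a `(V, c)`-bialgebra: `γ` is a morphism of braided vector spaces from
`(V, c)` to the infinitesimal part of `B`, and `γ(V)` generates `B` as a `K`-algebra. -/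
def IsVCBialgebra {V : Type*} [AddCommGroup V] [Module K V]
    (c : V ⊗[K] V →ₗ[K] V ⊗[K] V) (A : BB K B) (γ : V →ₗ[K] B) : Prop :=
  LinearMap.range γ ≤ Prim K A ∧
  A.braid ∘ₗ TensorProduct.map γ γ = TensorProduct.map γ γ ∘ₗ c ∧
  GeneratesAlgebra K A (LinearMap.range γ)

lemma ker_map_eq_aux {K V W : Type*} [Field K] [AddCommGroup V] [Module K V] [AddCommGroup W] [Module K W]
    (f : V →ₗ[K] W) :
    LinearMap.ker (TensorProduct.map f f) =
      LinearMap.range (lTensor V (LinearMap.ker f).subtype) ⊔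
        LinearMap.range (rTensor V (LinearMap.ker f).subtype) := by
  have hex : Function.Exact (LinearMap.ker f).subtype f.rangeRestrict := by
    rw [LinearMap.exact_iff, ker_rangeRestrict, Submodule.range_subtype]
  have h0 := TensorProduct.map_ker hex f.surjective_rangeRestrict hex f.surjective_rangeRestrict
  have hfac : TensorProduct.map f f =
      TensorProduct.map (LinearMap.range f).subtype (LinearMap.range f).subtype ∘ₗ
        TensorProduct.map f.rangeRestrict f.rangeRestrict := by
    rw [← TensorProduct.map_comp, LinearMap.subtype_comp_codRestrict]
  have hinj : Function.Injective
      (TensorProduct.map (LinearMap.range f).subtype (LinearMap.range f).subtype) := by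
    rw [← lTensor_comp_rTensor, LinearMap.coe_comp]
    exact (Module.Flat.lTensor_preserves_injective_linearMap _
        (Submodule.injective_subtype _)).comp
      (Module.Flat.rTensor_preserves_injective_linearMap _ (Submodule.injective_subtype _))
  rw [hfac, LinearMap.ker_comp, LinearMap.ker_eq_bot.mpr hinj, Submodule.comap_bot, h0]

/-- The kernel of a morphism of braided vector spaces is a
pre-categorical subspace of the source. -/
theorem stmt_0 {V W : Type*} [AddCommGroup V] [Module K V] [AddCommGroup W] [Module K W]
    (cV : V ⊗[K] V →ₗ[K] V ⊗[K] V) (cW : W ⊗[K] W →ₗ[K] W ⊗[K] W)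
    (hV : YangBaxter K V cV) (hW : YangBaxter K W cW)
    (f : V →ₗ[K] W) (hf : IsBraidedHom K cV cW f) :
    IsPreCategorical K cV (LinearMap.ker f) := by
  have hker : lT K (LinearMap.ker f) ⊔ rT K (LinearMap.ker f)
      = LinearMap.ker (TensorProduct.map f f) := by
    rw [ker_map_eq_aux, sup_comm]; rfl
  rw [IsPreCategorical, hker]
  rintro _ ⟨x, hx, rfl⟩
  simp only [SetLike.mem_coe, LinearMap.mem_ker] at hx ⊢
  have := congrFun (congrArg DFunLike.coe hf) x
  simp only [LinearMap.coe_comp, Function.comp_apply] at this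
  rw [← this, hx, map_zero]
end
end

section
/- Let L be a pre-categorical subspace of a braided vector space (V, c) over a field K, and let π : V → V/L be the canonical projection. Then there exists a unique K-linear map c' : (V/L)⊗(V/L) → (V/L)⊗(V/L) such that c'(π⊗π) = (π⊗π)c; moreover, c' satisfies the Yang–Baxter equation, so (V/L, c') is a braided vector space and π is a morphism of braided vector spaces. -/
open TensorProduct LinearMap

noncomputable section

variable (K : Type*) [Field K]

variable {B B' : Type*} [AddCommGroup B] [Module K B] [AddCommGroup B'] [Module K B']

/-- The quotient of a braided vector space by a pre-categorical
subspace carries a unique induced braiding, which again satisfies the Yang–Baxter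
equation, and the canonical projection is a morphism of braided vector spaces. -/
theorem stmt_1 {V : Type*} [AddCommGroup V] [Module K V]
    (c : V ⊗[K] V →ₗ[K] V ⊗[K] V) (hc : YangBaxter K V c)
    (L : Submodule K V) (hL : IsPreCategorical K c L) :
    (∃! c' : (V ⧸ L) ⊗[K] (V ⧸ L) →ₗ[K] (V ⧸ L) ⊗[K] (V ⧸ L),
        c' ∘ₗ TensorProduct.map L.mkQ L.mkQ = TensorProduct.map L.mkQ L.mkQ ∘ₗ c) ∧
    ∀ c' : (V ⧸ L) ⊗[K] (V ⧸ L) →ₗ[K] (V ⧸ L) ⊗[K] (V ⧸ L),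
      c' ∘ₗ TensorProduct.map L.mkQ L.mkQ = TensorProduct.map L.mkQ L.mkQ ∘ₗ c →
      YangBaxter K (V ⧸ L) c' := by

  classical
  set π := L.mkQ with hπ
  set q : V ⊗[K] V →ₗ[K] (V ⧸ L) ⊗[K] (V ⧸ L) := TensorProduct.map π π with hqdef
  have hqsurj : Function.Surjective q :=
    TensorProduct.map_surjective (Submodule.mkQ_surjective L) (Submodule.mkQ_surjective L)
  have hker : LinearMap.ker q = lT K L ⊔ rT K L := by
    rw [hqdef, TensorProduct.map_ker (LinearMap.exact_subtype_mkQ L)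
      (Submodule.mkQ_surjective L) (LinearMap.exact_subtype_mkQ L)
      (Submodule.mkQ_surjective L)]
    exact sup_comm _ _
  have hle : LinearMap.ker q ≤ LinearMap.ker (q ∘ₗ c) := by
    intro x hx
    rw [LinearMap.mem_ker] at hx ⊢
    have hx' : x ∈ lT K L ⊔ rT K L := by rwa [← hker, LinearMap.mem_ker]
    have hcx : c x ∈ LinearMap.ker q := by
      rw [hker]; exact hL ⟨x, hx', rfl⟩
    simpa using hcx
  set e := q.quotKerEquivOfSurjective hqsurj with hedef
  have he : ∀ x, e.symm (q x) = Submodule.Quotient.mk x := by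
    intro x
    rw [LinearEquiv.symm_apply_eq]
    rfl
  set c₀ : (V ⧸ L) ⊗[K] (V ⧸ L) →ₗ[K] (V ⧸ L) ⊗[K] (V ⧸ L) :=
    ((LinearMap.ker q).liftQ (q ∘ₗ c) hle) ∘ₗ e.symm.toLinearMap with hc₀def
  have hc₀ : c₀ ∘ₗ q = q ∘ₗ c := by
    apply LinearMap.ext; intro x
    simp [hc₀def, he x]
  refine ⟨⟨c₀, hc₀, ?_⟩, ?_⟩
  · intro y hy
    exact (LinearMap.cancel_right hqsurj).mp (hy.trans hc₀.symm)
  · intro c' hc'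
    set Q3 : (V ⊗[K] V) ⊗[K] V →ₗ[K] ((V ⧸ L) ⊗[K] (V ⧸ L)) ⊗[K] (V ⧸ L) :=
      TensorProduct.map q π with hQ3def
    have hQ3surj : Function.Surjective Q3 :=
      TensorProduct.map_surjective hqsurj (Submodule.mkQ_surjective L)
    have hc'' : ∀ t, c' (q t) = q (c t) := fun t => LinearMap.congr_fun hc' t
    have F1 : rTensor (V ⧸ L) c' ∘ₗ Q3 = Q3 ∘ₗ rTensor V c := by
      apply TensorProduct.ext'
      intro x z
      simp [hQ3def, hc'']
    have F2 : ((TensorProduct.assoc K (V ⧸ L) (V ⧸ L) (V ⧸ L)).symm.toLinearMap ∘ₗ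
          lTensor (V ⧸ L) c' ∘ₗ (TensorProduct.assoc K (V ⧸ L) (V ⧸ L) (V ⧸ L)).toLinearMap)
          ∘ₗ Q3
        = Q3 ∘ₗ ((TensorProduct.assoc K V V V).symm.toLinearMap ∘ₗ
          lTensor V c ∘ₗ (TensorProduct.assoc K V V V).toLinearMap) := by
      apply TensorProduct.ext'
      intro x z
      induction x with
      | zero => simp
      | add a b ha hb =>
        simp only [LinearMap.coe_comp, Function.comp_apply, LinearEquiv.coe_coe] at ha hb ⊢
        simp only [add_tmul, map_add, ha, hb]
      | tmul a b =>
        simp only [LinearMap.coe_comp, Function.comp_apply, LinearEquiv.coe_coe,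
          TensorProduct.map_tmul, hQ3def, hqdef, TensorProduct.assoc_tmul,
          lTensor_tmul]
        rw [show π b ⊗ₜ[K] π z = TensorProduct.map π π (b ⊗ₜ[K] z) from rfl,
          ← hqdef, hc'', hqdef, TensorProduct.map_map_assoc_symm]
        simp
    have key : ∀ (g h : (V ⊗[K] V) ⊗[K] V →ₗ[K] (V ⊗[K] V) ⊗[K] V)
        (g' h' : ((V ⧸ L) ⊗[K] (V ⧸ L)) ⊗[K] (V ⧸ L) →ₗ[K] ((V ⧸ L) ⊗[K] (V ⧸ L)) ⊗[K] (V ⧸ L)),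
        g' ∘ₗ Q3 = Q3 ∘ₗ g → h' ∘ₗ Q3 = Q3 ∘ₗ h →
        (g' ∘ₗ h') ∘ₗ Q3 = Q3 ∘ₗ (g ∘ₗ h) := by
      intro g h g' h' hg hh
      rw [LinearMap.comp_assoc, hh, ← LinearMap.comp_assoc, hg, LinearMap.comp_assoc]
    have hLHS := key _ _ _ _ F1 (key _ _ _ _ F2 F1)
    have hRHS := key _ _ _ _ F2 (key _ _ _ _ F1 F2)
    apply (LinearMap.cancel_right hQ3surj).mp
    unfold YangBaxter at hc
    simp only [LinearMap.comp_assoc] at hLHS hRHS hc ⊢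
    rw [hLHS, hRHS, hc]
end
end

section
/- Let (B, m, u, Δ, ε, c) be a braided bialgebra over a field K and let P = P(B) = {x ∈ B : Δ(x) = x⊗1 + 1⊗x} be its space of primitive elements. Then P is a categorical subspace of (B, c); that is, c(P⊗B) ⊆ B⊗P and c(B⊗P) ⊆ P⊗B (as subspaces of B⊗B). -/
open TensorProduct LinearMap

noncomputable section

variable (K : Type*) [Field K]

variable {B B' : Type*} [AddCommGroup B] [Module K B] [AddCommGroup B'] [Module K B']

section Aux

variable {K} {B : Type*} [AddCommGroup B] [Module K B]

lemma aux_assoc_tmul_right (u : B) (t : B ⊗[K] B) :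
    (TensorProduct.assoc K B B B) (t ⊗ₜ[K] u)
      = lTensor B ((TensorProduct.mk K B B).flip u) t := by
  induction t using TensorProduct.induction_on with
  | zero => simp
  | tmul y z => simp
  | add x y hx hy => simp [TensorProduct.add_tmul, hx, hy]

lemma aux_assoc_symm_tmul_left (u : B) (t : B ⊗[K] B) :
    (TensorProduct.assoc K B B B).symm (u ⊗ₜ[K] t)
      = rTensor B (TensorProduct.mk K B B u) t := by
  induction t using TensorProduct.induction_on with
  | zero => simp
  | tmul y z => simp
  | add x y hx hy => simp [TensorProduct.tmul_add, hx, hy]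

lemma aux_assoc_symm_lTensor_mk (u : B) (t : B ⊗[K] B) :
    (TensorProduct.assoc K B B B).symm (lTensor B (TensorProduct.mk K B B u) t)
      = rTensor B ((TensorProduct.mk K B B).flip u) t := by
  induction t using TensorProduct.induction_on with
  | zero => simp
  | tmul y z => simp
  | add x y hx hy => simp [hx, hy]

lemma aux_assoc_rTensor_flip_mk (u : B) (t : B ⊗[K] B) :
    (TensorProduct.assoc K B B B) (rTensor B ((TensorProduct.mk K B B).flip u) t)
      = lTensor B (TensorProduct.mk K B B u) t := by
  induction t using TensorProduct.induction_on with
  | zero => simp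
  | tmul y z => simp
  | add x y hx hy => simp [hx, hy]

variable (A : BB K B)

lemma braid_comp_mk :
    A.braid ∘ₗ TensorProduct.mk K B B (A.unit 1)
      = (TensorProduct.mk K B B).flip (A.unit 1) := by
  ext b; simpa using A.braid_unit_left b

lemma braid_comp_flip_mk :
    A.braid ∘ₗ (TensorProduct.mk K B B).flip (A.unit 1)
      = TensorProduct.mk K B B (A.unit 1) := by
  ext b; simpa using A.braid_unit_right b

/-- Key computation for `c(P ⊗ B) ⊆ B ⊗ P`. -/
lemma key_right (x b : B)
    (hx : A.comul x = x ⊗ₜ[K] A.unit 1 + A.unit 1 ⊗ₜ[K] x) :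
    lTensor B A.comul (A.braid (x ⊗ₜ[K] b))
      = lTensor B ((TensorProduct.mk K B B).flip (A.unit 1)) (A.braid (x ⊗ₜ[K] b))
        + lTensor B (TensorProduct.mk K B B (A.unit 1)) (A.braid (x ⊗ₜ[K] b)) := by
  have h := congrArg (fun f : B ⊗[K] B →ₗ[K] B ⊗[K] (B ⊗[K] B) => f (x ⊗ₜ[K] b))
    A.comul_braid_right
  simp only [LinearMap.comp_apply, LinearEquiv.coe_coe, rTensor_tmul, hx,
    TensorProduct.add_tmul, map_add, TensorProduct.assoc_tmul, lTensor_tmul,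
    A.braid_unit_left b] at h
  rw [TensorProduct.assoc_symm_tmul, aux_assoc_symm_tmul_left, rTensor_tmul,
    ← LinearMap.comp_apply (rTensor B A.braid), ← rTensor_comp, braid_comp_mk,
    aux_assoc_tmul_right, aux_assoc_rTensor_flip_mk] at h
  rw [h]

/-- Key computation for `c(B ⊗ P) ⊆ P ⊗ B`. -/
lemma key_left (x b : B)
    (hx : A.comul x = x ⊗ₜ[K] A.unit 1 + A.unit 1 ⊗ₜ[K] x) :
    rTensor B A.comul (A.braid (b ⊗ₜ[K] x))
      = rTensor B ((TensorProduct.mk K B B).flip (A.unit 1)) (A.braid (b ⊗ₜ[K] x))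
        + rTensor B (TensorProduct.mk K B B (A.unit 1)) (A.braid (b ⊗ₜ[K] x)) := by
  have h := congrArg (fun f : B ⊗[K] B →ₗ[K] (B ⊗[K] B) ⊗[K] B => f (b ⊗ₜ[K] x))
    A.comul_braid_left
  simp only [LinearMap.comp_apply, LinearEquiv.coe_coe, lTensor_tmul, hx,
    TensorProduct.tmul_add, map_add, TensorProduct.assoc_symm_tmul, rTensor_tmul,
    A.braid_unit_right b] at h
  rw [aux_assoc_tmul_right, TensorProduct.assoc_tmul,
    ← lTensor_comp_apply, braid_comp_flip_mk,
    aux_assoc_symm_lTensor_mk, lTensor_tmul, aux_assoc_symm_tmul_left] at h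
  exact h

end Aux

/-- The space of primitive elements of a braided bialgebra is a
categorical subspace. -/
theorem stmt_2 {B : Type*} [AddCommGroup B] [Module K B] (A : BB K B) :
    IsCategorical K A.braid (Prim K A) := by
  set D := A.comul - (TensorProduct.mk K B B).flip (A.unit 1)
      - TensorProduct.mk K B B (A.unit 1) with hD
  have hker : Prim K A = LinearMap.ker D := rfl
  have hexact : Function.Exact ((LinearMap.ker D).subtype) D :=
    LinearMap.exact_subtype_ker_map D
  have hmem : ∀ x : B, x ∈ Prim K A →
      A.comul x = x ⊗ₜ[K] A.unit 1 + A.unit 1 ⊗ₜ[K] x := by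
    intro x hx
    have : D x = 0 := hx
    have h2 : A.comul x - x ⊗ₜ[K] A.unit 1 - A.unit 1 ⊗ₜ[K] x = 0 := by
      simpa [hD, LinearMap.sub_apply, TensorProduct.mk_apply] using this
    linear_combination (norm := module) h2
  constructor
  · rintro _ ⟨_, ⟨s, rfl⟩, rfl⟩
    have h2 := Module.Flat.lTensor_exact (M := B) (R := K) hexact
    have hz : lTensor B D (A.braid (rTensor B (Prim K A).subtype s)) = 0 := by
      induction s using TensorProduct.induction_on with
      | zero => simp
      | tmul p b =>
        rw [hD, lTensor_sub, lTensor_sub]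
        simp only [LinearMap.sub_apply, rTensor_tmul, Submodule.coe_subtype]
        rw [key_right A p b (hmem p p.2)]
        abel
      | add x y hx hy => simp only [map_add, hx, hy, add_zero]
    rcases (h2 _).mp hz with ⟨w, hw⟩
    exact ⟨w, hw⟩
  · rintro _ ⟨_, ⟨s, rfl⟩, rfl⟩
    have h2 := Module.Flat.rTensor_exact (M := B) (R := K) hexact
    have hz : rTensor B D (A.braid (lTensor B (Prim K A).subtype s)) = 0 := by
      induction s using TensorProduct.induction_on with
      | zero => simp
      | tmul b p =>
        rw [hD, rTensor_sub, rTensor_sub]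
        simp only [LinearMap.sub_apply, lTensor_tmul, Submodule.coe_subtype]
        rw [key_left A p b (hmem p p.2)]
        abel
      | add x y hx hy => simp only [map_add, hx, hy, add_zero]
    rcases (h2 _).mp hz with ⟨w, hw⟩
    exact ⟨w, hw⟩
end
end

section
/- Let L and L' be categorical subspaces of a braided vector space (V, c) over a field K, and let f : L → L' be a morphism of categorical subspaces of (V, c). Then Ker(f) and Im(f) are categorical subspaces of (V, c). -/
open TensorProduct LinearMap

noncomputable section

variable (K : Type*) [Field K]

variable {B B' : Type*} [AddCommGroup B] [Module K B] [AddCommGroup B'] [Module K B']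

/-- The kernel and the image of a morphism of categorical subspaces are
categorical subspaces.  Here the induced maps `c_{L,V}`, `c_{V,L}`, `c_{L',V}`,
`c_{V,L'}` are given together with their defining (characterizing) equations. -/
theorem stmt_3 {V : Type*} [AddCommGroup V] [Module K V]
    (c : V ⊗[K] V →ₗ[K] V ⊗[K] V) (hc : YangBaxter K V c)
    (L L' : Submodule K V) (hL : IsCategorical K c L) (hL' : IsCategorical K c L')
    (cLV : (↥L ⊗[K] V) →ₗ[K] (V ⊗[K] ↥L)) (cVL : (V ⊗[K] ↥L) →ₗ[K] (↥L ⊗[K] V))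
    (cL'V : (↥L' ⊗[K] V) →ₗ[K] (V ⊗[K] ↥L')) (cVL' : (V ⊗[K] ↥L') →ₗ[K] (↥L' ⊗[K] V))
    (hcLV : lTensor V L.subtype ∘ₗ cLV = c ∘ₗ rTensor V L.subtype)
    (hcVL : rTensor V L.subtype ∘ₗ cVL = c ∘ₗ lTensor V L.subtype)
    (hcL'V : lTensor V L'.subtype ∘ₗ cL'V = c ∘ₗ rTensor V L'.subtype)
    (hcVL' : rTensor V L'.subtype ∘ₗ cVL' = c ∘ₗ lTensor V L'.subtype)
    (f : ↥L →ₗ[K] ↥L')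
    (hf1 : cL'V ∘ₗ rTensor V f = lTensor V f ∘ₗ cLV)
    (hf2 : cVL' ∘ₗ lTensor V f = rTensor V f ∘ₗ cVL) :
    IsCategorical K c ((LinearMap.ker f).map L.subtype) ∧
    IsCategorical K c ((LinearMap.range f).map L'.subtype) := by
  classical
  set N : Submodule K V := (LinearMap.ker f).map L.subtype with hNdef
  set M : Submodule K V := (LinearMap.range f).map L'.subtype with hMdef
  have hmemN : ∀ x : LinearMap.ker f,
      (L.subtype ∘ₗ (LinearMap.ker f).subtype) x ∈ N := fun x =>
    Submodule.mem_map_of_mem x.2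
  set j : (LinearMap.ker f) →ₗ[K] N :=
    (L.subtype ∘ₗ (LinearMap.ker f).subtype).codRestrict N hmemN with hjdef
  have hNj : N.subtype ∘ₗ j = L.subtype ∘ₗ (LinearMap.ker f).subtype := rfl
  have hjsurj : Function.Surjective j := by
    rintro ⟨y, hy⟩
    obtain ⟨x, hx, rfl⟩ := hy
    exact ⟨⟨x, hx⟩, rfl⟩
  have hmemM : ∀ x : L, (L'.subtype ∘ₗ f) x ∈ M := fun x =>
    Submodule.mem_map_of_mem ⟨x, rfl⟩
  set j' : L →ₗ[K] M := (L'.subtype ∘ₗ f).codRestrict M hmemM with hj'def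
  have hMj : M.subtype ∘ₗ j' = L'.subtype ∘ₗ f := rfl
  have hj'surj : Function.Surjective j' := by
    rintro ⟨y, hy⟩
    obtain ⟨x, hx, rfl⟩ := hy
    obtain ⟨z, rfl⟩ := hx
    exact ⟨z, rfl⟩
  have hker0 : f ∘ₗ (LinearMap.ker f).subtype = 0 := by
    ext x; simp [LinearMap.mem_ker.mp x.2]
  have hexactL : Function.Exact (lTensor V (LinearMap.ker f).subtype) (lTensor V f) :=
    Module.Flat.lTensor_exact V (LinearMap.exact_subtype_ker_map f)
  have hexactR : Function.Exact (rTensor V (LinearMap.ker f).subtype) (rTensor V f) :=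
    Module.Flat.rTensor_exact V (LinearMap.exact_subtype_ker_map f)
  -- composed tensor maps
  have hNr : rTensor V N.subtype ∘ₗ rTensor V j
      = rTensor V L.subtype ∘ₗ rTensor V (LinearMap.ker f).subtype := by
    rw [← LinearMap.rTensor_comp, ← LinearMap.rTensor_comp, hNj]
  have hNl : lTensor V N.subtype ∘ₗ lTensor V j
      = lTensor V L.subtype ∘ₗ lTensor V (LinearMap.ker f).subtype := by
    rw [← LinearMap.lTensor_comp, ← LinearMap.lTensor_comp, hNj]
  have hMr : rTensor V M.subtype ∘ₗ rTensor V j'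
      = rTensor V L'.subtype ∘ₗ rTensor V f := by
    rw [← LinearMap.rTensor_comp, ← LinearMap.rTensor_comp, hMj]
  have hMl : lTensor V M.subtype ∘ₗ lTensor V j'
      = lTensor V L'.subtype ∘ₗ lTensor V f := by
    rw [← LinearMap.lTensor_comp, ← LinearMap.lTensor_comp, hMj]
  have hrf0 : rTensor V f ∘ₗ rTensor V (LinearMap.ker f).subtype = 0 := by
    rw [← LinearMap.rTensor_comp, hker0, LinearMap.rTensor_zero]
  have hlf0 : lTensor V f ∘ₗ lTensor V (LinearMap.ker f).subtype = 0 := by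
    rw [← LinearMap.lTensor_comp, hker0, LinearMap.lTensor_zero]
  have ecLV : ∀ x, c (rTensor V L.subtype x) = lTensor V L.subtype (cLV x) := fun x => by
    simpa only [LinearMap.comp_apply] using (LinearMap.congr_fun hcLV x).symm
  have ecVL : ∀ x, c (lTensor V L.subtype x) = rTensor V L.subtype (cVL x) := fun x => by
    simpa only [LinearMap.comp_apply] using (LinearMap.congr_fun hcVL x).symm
  have ecL'V : ∀ x, c (rTensor V L'.subtype x) = lTensor V L'.subtype (cL'V x) := fun x => by
    simpa only [LinearMap.comp_apply] using (LinearMap.congr_fun hcL'V x).symm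
  have ecVL' : ∀ x, c (lTensor V L'.subtype x) = rTensor V L'.subtype (cVL' x) := fun x => by
    simpa only [LinearMap.comp_apply] using (LinearMap.congr_fun hcVL' x).symm
  have ef1 : ∀ x, cL'V (rTensor V f x) = lTensor V f (cLV x) := fun x => by
    simpa only [LinearMap.comp_apply] using LinearMap.congr_fun hf1 x
  have ef2 : ∀ x, cVL' (lTensor V f x) = rTensor V f (cVL x) := fun x => by
    simpa only [LinearMap.comp_apply] using LinearMap.congr_fun hf2 x
  have eNr : ∀ x, rTensor V N.subtype (rTensor V j x)
      = rTensor V L.subtype (rTensor V (LinearMap.ker f).subtype x) := fun x => by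
    simpa only [LinearMap.comp_apply] using LinearMap.congr_fun hNr x
  have eNl : ∀ x, lTensor V N.subtype (lTensor V j x)
      = lTensor V L.subtype (lTensor V (LinearMap.ker f).subtype x) := fun x => by
    simpa only [LinearMap.comp_apply] using LinearMap.congr_fun hNl x
  have eMr : ∀ x, rTensor V M.subtype (rTensor V j' x)
      = rTensor V L'.subtype (rTensor V f x) := fun x => by
    simpa only [LinearMap.comp_apply] using LinearMap.congr_fun hMr x
  have eMl : ∀ x, lTensor V M.subtype (lTensor V j' x)
      = lTensor V L'.subtype (lTensor V f x) := fun x => by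
    simpa only [LinearMap.comp_apply] using LinearMap.congr_fun hMl x
  have erf0 : ∀ x, rTensor V f (rTensor V (LinearMap.ker f).subtype x) = 0 := fun x => by
    have := LinearMap.congr_fun hrf0 x
    simpa only [LinearMap.comp_apply, LinearMap.zero_apply] using this
  have elf0 : ∀ x, lTensor V f (lTensor V (LinearMap.ker f).subtype x) = 0 := fun x => by
    have := LinearMap.congr_fun hlf0 x
    simpa only [LinearMap.comp_apply, LinearMap.zero_apply] using this
  constructor
  · constructor
    · rintro x hx
      obtain ⟨z, ⟨w, rfl⟩, rfl⟩ := hx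
      obtain ⟨w', rfl⟩ := LinearMap.rTensor_surjective V hjsurj w
      have h1 : c (rTensor V N.subtype (rTensor V j w'))
          = lTensor V L.subtype (cLV (rTensor V (LinearMap.ker f).subtype w')) := by
        rw [eNr, ecLV]
      have h2 : lTensor V f (cLV (rTensor V (LinearMap.ker f).subtype w')) = 0 := by
        rw [← ef1, erf0, map_zero]
      have h3 : cLV (rTensor V (LinearMap.ker f).subtype w')
          ∈ LinearMap.range (lTensor V (LinearMap.ker f).subtype) := by
        rw [← hexactL.linearMap_ker_eq]; exact h2
      obtain ⟨t, ht⟩ := h3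
      exact ⟨lTensor V j t, by rw [eNl, ht, h1]⟩
    · rintro x hx
      obtain ⟨z, ⟨w, rfl⟩, rfl⟩ := hx
      obtain ⟨w', rfl⟩ := LinearMap.lTensor_surjective V hjsurj w
      have h1 : c (lTensor V N.subtype (lTensor V j w'))
          = rTensor V L.subtype (cVL (lTensor V (LinearMap.ker f).subtype w')) := by
        rw [eNl, ecVL]
      have h2 : rTensor V f (cVL (lTensor V (LinearMap.ker f).subtype w')) = 0 := by
        rw [← ef2, elf0, map_zero]
      have h3 : cVL (lTensor V (LinearMap.ker f).subtype w')
          ∈ LinearMap.range (rTensor V (LinearMap.ker f).subtype) := by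
        rw [← hexactR.linearMap_ker_eq]; exact h2
      obtain ⟨t, ht⟩ := h3
      exact ⟨rTensor V j t, by rw [eNr, ht, h1]⟩
  · constructor
    · rintro x hx
      obtain ⟨z, ⟨w, rfl⟩, rfl⟩ := hx
      obtain ⟨w₀, rfl⟩ := LinearMap.rTensor_surjective V hj'surj w
      exact ⟨lTensor V j' (cLV w₀), by rw [eMl, eMr, ecL'V, ef1]⟩
    · rintro x hx
      obtain ⟨z, ⟨w, rfl⟩, rfl⟩ := hx
      obtain ⟨w₀, rfl⟩ := LinearMap.lTensor_surjective V hj'surj w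
      exact ⟨rTensor V j' (cVL w₀), by rw [eMr, eMl, ecVL', ef2]⟩
end
end

section
/- Let (B, m, u, Δ, ε, c) be a braided bialgebra over a field K and let V be a categorical subspace of (B, c). Define the iterated powers of V in B by V^{·0} := K·1_B and V^{·n} := V^{·(n−1)}·V (the linear span of products x·v with x ∈ V^{·(n−1)}, v ∈ V) for n ≥ 1. Then V^{·n} is a categorical subspace of (B, c) for every n ∈ ℕ. -/
open TensorProduct LinearMap

noncomputable section

variable (K : Type*) [Field K]

variable {B B' : Type*} [AddCommGroup B] [Module K B] [AddCommGroup B'] [Module K B']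

/-!
The compatibility `c (m ⊗ B) = (B ⊗ m)(c ⊗ B)(B ⊗ c)` moves an element `b` past a product
`x y` one factor at a time: first past `y`, then past `x`. Hence if `c` carries `M ⊗ B` into
`B ⊗ M` and `N ⊗ B` into `B ⊗ N`, it carries `(M·N) ⊗ B` into `B ⊗ (M·N)`, and symmetrically on
the other side; so products of categorical subspaces are categorical. Since `c (1 ⊗ b) = b ⊗ 1`,
the line `K·1` is categorical, and induction on `n` gives the claim for `V^{·n} = V^{·(n-1)}·V`.
-/

section BraidedSubspaces

variable {K} {V W : Type*} [AddCommGroup V] [Module K V] [AddCommGroup W] [Module K W]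

lemma lT_eq_map₂ (L : Submodule K V) : lT K L = Submodule.map₂ (TensorProduct.mk K V V) L ⊤ := by
  rw [lT, rTensor, TensorProduct.range_map, Submodule.range_subtype, LinearMap.range_id]

lemma rT_eq_map₂ (L : Submodule K V) : rT K L = Submodule.map₂ (TensorProduct.mk K V V) ⊤ L := by
  rw [rT, lTensor, TensorProduct.range_map, Submodule.range_subtype, LinearMap.range_id]

lemma tmul_mem_lT {L : Submodule K V} {x : V} (hx : x ∈ L) (b : V) : x ⊗ₜ[K] b ∈ lT K L :=
  ⟨(⟨x, hx⟩ : L) ⊗ₜ b, rfl⟩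

lemma tmul_mem_rT (b : V) {L : Submodule K V} {x : V} (hx : x ∈ L) : b ⊗ₜ[K] x ∈ rT K L :=
  ⟨b ⊗ₜ (⟨x, hx⟩ : L), rfl⟩

lemma map_lT_le_iff (f : V ⊗[K] V →ₗ[K] W) (L : Submodule K V) (P : Submodule K W) :
    (lT K L).map f ≤ P ↔ ∀ x ∈ L, ∀ b, f (x ⊗ₜ b) ∈ P := by
  simp [lT_eq_map₂, Submodule.map_le_iff_le_comap, Submodule.map₂_le]

lemma map_rT_le_iff (f : V ⊗[K] V →ₗ[K] W) (L : Submodule K V) (P : Submodule K W) :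
    (rT K L).map f ≤ P ↔ ∀ b, ∀ x ∈ L, f (b ⊗ₜ x) ∈ P := by
  simp [rT_eq_map₂, Submodule.map_le_iff_le_comap, Submodule.map₂_le]

lemma map_lT_le_of_span {f : V ⊗[K] V →ₗ[K] W} {L : Submodule K V} {P : Submodule K W}
    {S : Set V} (hS : Submodule.span K S = L) (h : ∀ x ∈ S, ∀ b, f (x ⊗ₜ b) ∈ P) :
    (lT K L).map f ≤ P := by
  rw [lT_eq_map₂, ← hS, ← Submodule.span_univ, Submodule.map₂_span_span, Submodule.map_span_le]
  rintro _ ⟨x, hx, b, -, rfl⟩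
  exact h x hx b

lemma map_rT_le_of_span {f : V ⊗[K] V →ₗ[K] W} {L : Submodule K V} {P : Submodule K W}
    {S : Set V} (hS : Submodule.span K S = L) (h : ∀ b, ∀ x ∈ S, f (b ⊗ₜ x) ∈ P) :
    (rT K L).map f ≤ P := by
  rw [rT_eq_map₂, ← hS, ← Submodule.span_univ, Submodule.map₂_span_span, Submodule.map_span_le]
  rintro _ ⟨b, -, x, hx, rfl⟩
  exact h b x hx

end BraidedSubspaces

section Products

variable {K} (A : BB K B) {M N : Submodule K B}

lemma mul_tmul_mem_mulSub {m n : B} (hm : m ∈ M) (hn : n ∈ N) :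
    A.mul (m ⊗ₜ n) ∈ mulSub K A M N :=
  Submodule.mem_map_of_mem ⟨(⟨m, hm⟩ : M) ⊗ₜ (⟨n, hn⟩ : N), rfl⟩

lemma mulSub_eq_span (M N : Submodule K B) :
    mulSub K A M N = Submodule.span K (Set.image2 (fun m n ↦ A.mul (m ⊗ₜ n)) M N) := by
  rw [mulSub, TensorProduct.range_map, Submodule.range_subtype, Submodule.range_subtype,
    Submodule.map_map₂, Submodule.map₂_eq_span_image2]
  rfl

lemma braid_mul_tmul (x y b : B) :
    A.braid (A.mul (x ⊗ₜ y) ⊗ₜ b) = lTensor B A.mul (TensorProduct.assoc K B B B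
      (rTensor B A.braid ((TensorProduct.assoc K B B B).symm (x ⊗ₜ A.braid (y ⊗ₜ b))))) := by
  simpa using LinearMap.congr_fun A.braid_mul_left ((x ⊗ₜ y) ⊗ₜ b)

lemma braid_tmul_mul (b x y : B) :
    A.braid (b ⊗ₜ A.mul (x ⊗ₜ y)) = rTensor B A.mul ((TensorProduct.assoc K B B B).symm
      (lTensor B A.braid (TensorProduct.assoc K B B B (A.braid (b ⊗ₜ x) ⊗ₜ y)))) := by
  simpa using LinearMap.congr_fun A.braid_mul_right (b ⊗ₜ (x ⊗ₜ y))


lemma braid_mul_tmul_mem_rT (hM : (lT K M).map A.braid ≤ rT K M)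
    (hN : (lT K N).map A.braid ≤ rT K N) {m n : B} (hm : m ∈ M) (hn : n ∈ N) (b : B) :
    A.braid (A.mul (m ⊗ₜ n) ⊗ₜ b) ∈ rT K (mulSub K A M N) := by
  rw [braid_mul_tmul]
  have hnb : A.braid (n ⊗ₜ b) ∈ rT K N := hN (Submodule.mem_map_of_mem (tmul_mem_lT hn b))
  refine (map_rT_le_iff (lTensor B A.mul ∘ₗ (TensorProduct.assoc K B B B).toLinearMap ∘ₗ
    rTensor B A.braid ∘ₗ (TensorProduct.assoc K B B B).symm.toLinearMap ∘ₗ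
    TensorProduct.mk K B (B ⊗[K] B) m) N _).2 ?_ (Submodule.mem_map_of_mem hnb)
  intro b' n' hn'
  have hmb : A.braid (m ⊗ₜ b') ∈ rT K M := hM (Submodule.mem_map_of_mem (tmul_mem_lT hm b'))
  refine (map_rT_le_iff (lTensor B A.mul ∘ₗ (TensorProduct.assoc K B B B).toLinearMap ∘ₗ
    (TensorProduct.mk K (B ⊗[K] B) B).flip n') M _).2 ?_ (Submodule.mem_map_of_mem hmb)
  intro b'' m' hm'
  simpa using tmul_mem_rT b'' (mul_tmul_mem_mulSub A hm' hn')

lemma braid_tmul_mul_mem_lT (hM : (rT K M).map A.braid ≤ lT K M)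
    (hN : (rT K N).map A.braid ≤ lT K N) {m n : B} (hm : m ∈ M) (hn : n ∈ N) (b : B) :
    A.braid (b ⊗ₜ A.mul (m ⊗ₜ n)) ∈ lT K (mulSub K A M N) := by
  rw [braid_tmul_mul]
  have hbm : A.braid (b ⊗ₜ m) ∈ lT K M := hM (Submodule.mem_map_of_mem (tmul_mem_rT b hm))
  refine (map_lT_le_iff (rTensor B A.mul ∘ₗ (TensorProduct.assoc K B B B).symm.toLinearMap ∘ₗ
    lTensor B A.braid ∘ₗ (TensorProduct.assoc K B B B).toLinearMap ∘ₗ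
    (TensorProduct.mk K (B ⊗[K] B) B).flip n) M _).2 ?_ (Submodule.mem_map_of_mem hbm)
  intro m' hm' b'
  have hbn : A.braid (b' ⊗ₜ n) ∈ lT K N := hN (Submodule.mem_map_of_mem (tmul_mem_rT b' hn))
  refine (map_lT_le_iff (rTensor B A.mul ∘ₗ (TensorProduct.assoc K B B B).symm.toLinearMap ∘ₗ
    TensorProduct.mk K B (B ⊗[K] B) m') N _).2 ?_ (Submodule.mem_map_of_mem hbn)
  intro n' hn' b''
  simpa using tmul_mem_lT (mul_tmul_mem_mulSub A hm' hn') b''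

theorem IsCategorical.mulSub (hM : IsCategorical K A.braid M) (hN : IsCategorical K A.braid N) :
    IsCategorical K A.braid (mulSub K A M N) := by
  constructor
  · refine map_lT_le_of_span (mulSub_eq_span A M N).symm ?_
    rintro _ ⟨m, hm, n, hn, rfl⟩ b
    exact braid_mul_tmul_mem_rT A hM.1 hN.1 hm hn b
  · refine map_rT_le_of_span (mulSub_eq_span A M N).symm ?_
    rintro b _ ⟨m, hm, n, hn, rfl⟩
    exact braid_tmul_mul_mem_lT A hM.2 hN.2 hm hn b

lemma isCategorical_range_unit : IsCategorical K A.braid (LinearMap.range A.unit) := by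
  have hspan : Submodule.span K {A.unit 1} = LinearMap.range A.unit := by
    rw [LinearMap.span_singleton_eq_range]
    congr 1
    ext
    simp
  constructor
  · refine map_lT_le_of_span hspan ?_
    rintro _ rfl b
    rw [A.braid_unit_left]
    exact tmul_mem_rT b (LinearMap.mem_range_self _ 1)
  · refine map_rT_le_of_span hspan ?_
    rintro b _ rfl
    rw [A.braid_unit_right]
    exact tmul_mem_lT (LinearMap.mem_range_self _ 1) b

end Products

/-- The iterated powers of a categorical subspace of a braided
bialgebra are categorical subspaces. -/
theorem stmt_4 {B : Type*} [AddCommGroup B] [Module K B] (A : BB K B)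
    (V : Submodule K B) (hV : IsCategorical K A.braid V) :
    ∀ n : ℕ, IsCategorical K A.braid (powSub K A V n) := by
  intro n
  induction n with
  | zero => exact isCategorical_range_unit A
  | succ n ih => exact ih.mulSub A hV
end
end

section
/- Let (B, m, u, Δ, ε, c) be a braided bialgebra over a field K which is generated as a K-algebra by a subspace V ⊆ B. Then the following are equivalent: (i) V is a braided subspace of B, i.e. c(V⊗V) ⊆ V⊗V; (ii) V is a categorical subspace of (B, c), i.e. c(V⊗B) ⊆ B⊗V and c(B⊗V) ⊆ V⊗B. -/
open TensorProduct LinearMap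

noncomputable section

variable (K : Type*) [Field K]

variable {B B' : Type*} [AddCommGroup B] [Module K B] [AddCommGroup B'] [Module K B']

/-!
Write `M ⊗ₛ N` for the image of `M ⊗ N` in `B ⊗ B`. If `c(V ⊗ₛ V) ≤ V ⊗ₛ V`, the compatibility
of `c` with `m` shows that `c(X ⊗ₛ V) ≤ V ⊗ₛ X` passes from `X` and `Y` to the product `XY`, and
likewise on the other side; by induction it holds for every power `Vⁿ`, hence for their sum `B`.
Conversely, if `V` is categorical then `c(V ⊗ₛ V)` lies in `(B ⊗ₛ V) ⊓ (V ⊗ₛ B)`, which over a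
field is `V ⊗ₛ V`: the projection `π ⊗ π` onto `V ⊗ₛ V` along a complement of `V` fixes both.
-/

open Submodule

local notation:100 M:100 " ⊗ₛ " N:101 => Submodule.map₂ (TensorProduct.mk _ _ _) M N

section TensorSubmodules

variable {R : Type*} [CommSemiring R] {P Q S : Type*} [AddCommMonoid P] [Module R P]
  [AddCommMonoid Q] [Module R Q] [AddCommMonoid S] [Module R S]

lemma map_map_map₂_mk {P' Q' : Type*} [AddCommMonoid P'] [Module R P'] [AddCommMonoid Q']
    [Module R Q'] (f : P →ₗ[R] P') (g : Q →ₗ[R] Q') (M : Submodule R P) (N : Submodule R Q) :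
    (M ⊗ₛ N).map (TensorProduct.map f g) = M.map f ⊗ₛ N.map g := by
  rw [map_map₂, map₂_map_map]
  rfl

lemma map_assoc_map₂_mk (L : Submodule R P) (M : Submodule R Q) (N : Submodule R S) :
    (L ⊗ₛ M ⊗ₛ N).map (TensorProduct.assoc R P Q S).toLinearMap = L ⊗ₛ (M ⊗ₛ N) := by
  have hLMN : L ⊗ₛ M ⊗ₛ N
      = range (TensorProduct.map (TensorProduct.map L.subtype M.subtype) N.subtype) := by
    simp only [range_map, range_subtype]
  have hLMN' : L ⊗ₛ (M ⊗ₛ N)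
      = range (TensorProduct.map L.subtype (TensorProduct.map M.subtype N.subtype)) := by
    simp only [range_map, range_subtype]
  rw [hLMN, hLMN', ← LinearMap.range_comp, ← map_map_comp_assoc_eq,
    range_comp_of_range_eq_top _ (LinearEquiv.range _)]

lemma map_assoc_symm_map₂_mk (L : Submodule R P) (M : Submodule R Q) (N : Submodule R S) :
    (L ⊗ₛ (M ⊗ₛ N)).map (TensorProduct.assoc R P Q S).symm.toLinearMap = L ⊗ₛ M ⊗ₛ N :=
  (map_symm_eq_iff _).2 (map_assoc_map₂_mk L M N)

end TensorSubmodules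

section Braiding

variable {K}

lemma map₂_mk_top_inf_map₂_mk_top {P Q : Type*} [AddCommGroup P] [Module K P] [AddCommGroup Q]
    [Module K Q] (M : Submodule K P) (N : Submodule K Q) :
    M ⊗ₛ ⊤ ⊓ ⊤ ⊗ₛ N = M ⊗ₛ N := by
  refine le_antisymm (fun t ⟨htM, htN⟩ => ?_)
    (le_inf (map₂_le_map₂_right le_top) (map₂_le_map₂_left le_top))
  obtain ⟨M', hM⟩ := M.exists_isCompl
  obtain ⟨N', hN⟩ := N.exists_isCompl
  set πM := M.projection M' hM
  set πN := N.projection N' hN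
  have hfixM : M ⊗ₛ ⊤ ≤ eqLocus (rTensor Q πM) LinearMap.id := map₂_le.2 fun m hm q _ => by
    simp [πM, projection_apply_of_mem_left hM hm]
  have hfixN : ⊤ ⊗ₛ N ≤ eqLocus (lTensor P πN) LinearMap.id := map₂_le.2 fun p _ n hn => by
    simp [πN, projection_apply_of_mem_left hN hn]
  have hproj : TensorProduct.map πM πN t = t := by
    rw [← lTensor_comp_rTensor, comp_apply, hfixM htM, id_apply, hfixN htN, id_apply]
  rw [← hproj, ← range_projection hM, ← range_projection hN, ← range_map]
  exact mem_range_self _ t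

def BraidsInto (c : B ⊗[K] B →ₗ[K] B ⊗[K] B) (M N : Submodule K B) : Prop :=
  (M ⊗ₛ N).map c ≤ N ⊗ₛ M

lemma braidsInto_iSup_left {ι : Sort*} {c : B ⊗[K] B →ₗ[K] B ⊗[K] B} {M : ι → Submodule K B}
    {N : Submodule K B} (h : ∀ i, BraidsInto c (M i) N) : BraidsInto c (⨆ i, M i) N := by
  rw [BraidsInto, map₂_iSup_left, Submodule.map_iSup]
  exact iSup_le fun i => (h i).trans (map₂_le_map₂_right (le_iSup M i))

lemma braidsInto_iSup_right {ι : Sort*} {c : B ⊗[K] B →ₗ[K] B ⊗[K] B} {M : Submodule K B}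
    {N : ι → Submodule K B} (h : ∀ i, BraidsInto c M (N i)) : BraidsInto c M (⨆ i, N i) := by
  rw [BraidsInto, map₂_iSup_right, Submodule.map_iSup]
  exact iSup_le fun i => (h i).trans (map₂_le_map₂_left (le_iSup N i))

lemma lT_eq_map₂_mk (L : Submodule K B) : lT K L = L ⊗ₛ ⊤ := by
  rw [lT, rTensor, range_map, range_subtype, range_id]

lemma rT_eq_map₂_mk (L : Submodule K B) : rT K L = ⊤ ⊗ₛ L := by
  rw [rT, lTensor, range_map, range_subtype, range_id]

lemma isCategorical_iff_braidsInto (c : B ⊗[K] B →ₗ[K] B ⊗[K] B) (L : Submodule K B) :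
    IsCategorical K c L ↔ BraidsInto c L ⊤ ∧ BraidsInto c ⊤ L := by
  rw [IsCategorical, lT_eq_map₂_mk, rT_eq_map₂_mk, BraidsInto, BraidsInto]

lemma IsCategorical.braidsInto_self {c : B ⊗[K] B →ₗ[K] B ⊗[K] B} {L : Submodule K B}
    (h : IsCategorical K c L) : BraidsInto c L L := by
  rw [isCategorical_iff_braidsInto] at h
  calc (L ⊗ₛ L).map c ≤ (L ⊗ₛ ⊤).map c ⊓ (⊤ ⊗ₛ L).map c :=
        le_inf (map_mono (map₂_le_map₂_right le_top)) (map_mono (map₂_le_map₂_left le_top))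
    _ ≤ ⊤ ⊗ₛ L ⊓ L ⊗ₛ ⊤ := inf_le_inf h.1 h.2
    _ = L ⊗ₛ L := by rw [inf_comm, map₂_mk_top_inf_map₂_mk_top]

lemma mulSub_eq_map_map₂_mk (A : BB K B) (M N : Submodule K B) :
    mulSub K A M N = (M ⊗ₛ N).map A.mul := by
  rw [mulSub, range_map, range_subtype, range_subtype]

lemma braidsInto_range_unit_left (A : BB K B) (P : Submodule K B) :
    BraidsInto A.braid (range A.unit) P := by
  refine map_le_iff_le_comap.2 (map₂_le.2 ?_)
  rintro _ ⟨k, rfl⟩ p hp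
  have hk : A.unit k = k • A.unit 1 := by rw [← map_smul, smul_eq_mul, mul_one]
  rw [mem_comap, TensorProduct.mk_apply, hk, ← smul_tmul', map_smul, A.braid_unit_left]
  exact smul_mem _ _ (apply_mem_map₂ _ hp (mem_range_self _ 1))

lemma braidsInto_range_unit_right (A : BB K B) (P : Submodule K B) :
    BraidsInto A.braid P (range A.unit) := by
  refine map_le_iff_le_comap.2 (map₂_le.2 ?_)
  rintro p hp _ ⟨k, rfl⟩
  have hk : A.unit k = k • A.unit 1 := by rw [← map_smul, smul_eq_mul, mul_one]
  rw [mem_comap, TensorProduct.mk_apply, hk, tmul_smul, map_smul, A.braid_unit_right]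
  exact smul_mem _ _ (apply_mem_map₂ _ (mem_range_self _ 1) hp)

lemma braidsInto_mulSub_right {A : BB K B} {P M N : Submodule K B}
    (hM : BraidsInto A.braid P M) (hN : BraidsInto A.braid P N) :
    BraidsInto A.braid P (mulSub K A M N) := by
  let α := (TensorProduct.assoc K B B B).toLinearMap
  let α' := (TensorProduct.assoc K B B B).symm.toLinearMap
  calc (P ⊗ₛ mulSub K A M N).map A.braid
      = (P ⊗ₛ (M ⊗ₛ N)).map (A.braid ∘ₗ lTensor B A.mul) := by
        rw [mulSub_eq_map_map₂_mk, Submodule.map_comp, lTensor, map_map_map₂_mk, Submodule.map_id]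
    _ = (((((P ⊗ₛ M).map A.braid ⊗ₛ N).map α).map (lTensor B A.braid)).map α').map
          (rTensor B A.mul) := by
        simp only [A.braid_mul_right, Submodule.map_comp, α, α', map_assoc_symm_map₂_mk, rTensor,
          map_map_map₂_mk, Submodule.map_id]
    _ ≤ ((((M ⊗ₛ P ⊗ₛ N).map α).map (lTensor B A.braid)).map α').map (rTensor B A.mul) := by
        gcongr; exact hM
    _ = ((M ⊗ₛ (P ⊗ₛ N).map A.braid).map α').map (rTensor B A.mul) := by
        simp only [α, map_assoc_map₂_mk, lTensor, map_map_map₂_mk, Submodule.map_id]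
    _ ≤ ((M ⊗ₛ (N ⊗ₛ P)).map α').map (rTensor B A.mul) := by
        gcongr; exact hN
    _ = mulSub K A M N ⊗ₛ P := by
        simp only [α', map_assoc_symm_map₂_mk, rTensor, map_map_map₂_mk, Submodule.map_id,
          mulSub_eq_map_map₂_mk]

lemma braidsInto_mulSub_left {A : BB K B} {P M N : Submodule K B}
    (hM : BraidsInto A.braid M P) (hN : BraidsInto A.braid N P) :
    BraidsInto A.braid (mulSub K A M N) P := by
  let α := (TensorProduct.assoc K B B B).toLinearMap
  let α' := (TensorProduct.assoc K B B B).symm.toLinearMap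
  calc (mulSub K A M N ⊗ₛ P).map A.braid
      = (M ⊗ₛ N ⊗ₛ P).map (A.braid ∘ₗ rTensor B A.mul) := by
        rw [mulSub_eq_map_map₂_mk, Submodule.map_comp, rTensor, map_map_map₂_mk, Submodule.map_id]
    _ = ((((M ⊗ₛ (N ⊗ₛ P).map A.braid).map α').map (rTensor B A.braid)).map α).map
          (lTensor B A.mul) := by
        simp only [A.braid_mul_left, Submodule.map_comp, α, α', map_assoc_map₂_mk, lTensor,
          map_map_map₂_mk, Submodule.map_id]
    _ ≤ ((((M ⊗ₛ (P ⊗ₛ N)).map α').map (rTensor B A.braid)).map α).map (lTensor B A.mul) := by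
        gcongr; exact hN
    _ = (((M ⊗ₛ P).map A.braid ⊗ₛ N).map α).map (lTensor B A.mul) := by
        simp only [α', map_assoc_symm_map₂_mk, rTensor, map_map_map₂_mk, Submodule.map_id]
    _ ≤ ((P ⊗ₛ M ⊗ₛ N).map α).map (lTensor B A.mul) := by
        gcongr; exact hM
    _ = P ⊗ₛ mulSub K A M N := by
        simp only [α, map_assoc_map₂_mk, lTensor, map_map_map₂_mk, Submodule.map_id,
          mulSub_eq_map_map₂_mk]

lemma braidsInto_powSub_left {A : BB K B} {V : Submodule K B} (h : BraidsInto A.braid V V) :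
    ∀ n, BraidsInto A.braid (powSub K A V n) V
  | 0 => braidsInto_range_unit_left A V
  | n + 1 => braidsInto_mulSub_left (braidsInto_powSub_left h n) h

lemma braidsInto_powSub_right {A : BB K B} {V : Submodule K B} (h : BraidsInto A.braid V V) :
    ∀ n, BraidsInto A.braid V (powSub K A V n)
  | 0 => braidsInto_range_unit_right A V
  | n + 1 => braidsInto_mulSub_right (braidsInto_powSub_right h n) h

lemma GeneratesAlgebra.isCategorical {A : BB K B} {V : Submodule K B}
    (hgen : GeneratesAlgebra K A V) (h : BraidsInto A.braid V V) : IsCategorical K A.braid V := by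
  rw [isCategorical_iff_braidsInto, ← hgen]
  exact ⟨braidsInto_iSup_right (braidsInto_powSub_right h),
    braidsInto_iSup_left (braidsInto_powSub_left h)⟩

end Braiding

/-- For a subspace `V` generating a braided bialgebra `B` as an
algebra, `V` is a braided subspace (`c(V⊗V) ⊆ V⊗V`) iff `V` is categorical. -/
theorem stmt_5 {B : Type*} [AddCommGroup B] [Module K B] (A : BB K B)
    (V : Submodule K B) (hgen : GeneratesAlgebra K A V) :
    Submodule.map A.braid (LinearMap.range (TensorProduct.map V.subtype V.subtype))
        ≤ LinearMap.range (TensorProduct.map V.subtype V.subtype)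
      ↔ IsCategorical K A.braid V := by
  rw [range_map, range_subtype]
  exact ⟨hgen.isCategorical, IsCategorical.braidsInto_self⟩
end
end

section
/- Let (B, m, u, Δ, ε, c) be a braided bialgebra over a field K with space of primitive elements P = P(B). Let V ⊆ P be a categorical subspace of (B, c) that generates B as a K-algebra, let j : V → P be the inclusion, and let b : P → V be a K-linear map. Then the following are equivalent: (i) j∘b : P → P is a morphism of categorical subspaces of (B, c); (ii) c_V(b⊗id_V) = (id_V⊗b)c_{P,V} and c_V(id_V⊗b) = (b⊗id_V)c_{V,P}, where c_V : V⊗V → V⊗V, c_{P,V} : P⊗V → V⊗P and c_{V,P} : V⊗P → P⊗V are the maps induced by c. -/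
open TensorProduct LinearMap

noncomputable section

variable (K : Type*) [Field K]

variable {B B' : Type*} [AddCommGroup B] [Module K B] [AddCommGroup B'] [Module K B']

/-!
Write `f = j ∘ b`. Condition (i) says that `c_{P,B} (f p ⊗ x) = (id ⊗ f) c_{P,B} (p ⊗ x)` and
`c_{B,P} (x ⊗ f p) = (f ⊗ id) c_{B,P} (x ⊗ p)` for all `x ∈ B`; pushed into `B ⊗ B` along the
injective inclusions, condition (ii) says the same for `x ∈ V` only. For each equation the
admissible `x` form a subspace of `B` (`commLocusPB`, `commLocusBP`) which contains `1` and,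
because `c` is compatible with `m`, is closed under multiplication. As `V` generates `B`, such a
subspace is all of `B` as soon as it contains `V`.
-/

namespace BB

variable {K} (A : BB K B) {N N' N'' : Type*} [AddCommGroup N] [Module K N]
  [AddCommGroup N'] [Module K N'] [AddCommGroup N''] [Module K N'']

def mulLTensor (γ : N →ₗ[K] B ⊗[K] N') : B ⊗[K] N →ₗ[K] B ⊗[K] N' :=
  rTensor N' A.mul ∘ₗ (TensorProduct.assoc K B B N').symm.toLinearMap ∘ₗ lTensor B γ

def mulRTensor (γ : N →ₗ[K] N' ⊗[K] B) : N ⊗[K] B →ₗ[K] N' ⊗[K] B :=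
  lTensor N' A.mul ∘ₗ (TensorProduct.assoc K N' B B).toLinearMap ∘ₗ rTensor B γ

lemma mulLTensor_comp (γ : N →ₗ[K] B ⊗[K] N') (f : N'' →ₗ[K] N) :
    A.mulLTensor (γ ∘ₗ f) = A.mulLTensor γ ∘ₗ lTensor B f := by
  simp only [mulLTensor, lTensor_comp, comp_assoc]

lemma mulRTensor_comp (γ : N →ₗ[K] N' ⊗[K] B) (f : N'' →ₗ[K] N) :
    A.mulRTensor (γ ∘ₗ f) = A.mulRTensor γ ∘ₗ rTensor B f := by
  simp only [mulRTensor, rTensor_comp, comp_assoc]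

lemma lTensor_comp_mulLTensor (γ : N →ₗ[K] B ⊗[K] N') (f : N' →ₗ[K] N'') :
    lTensor B f ∘ₗ A.mulLTensor γ = A.mulLTensor (lTensor B f ∘ₗ γ) := by
  apply TensorProduct.ext'
  intro b n
  simp only [mulLTensor, comp_apply, lTensor_tmul]
  induction γ n using TensorProduct.induction_on with
  | zero => simp
  | tmul x y => simp
  | add s t hs ht => simp only [map_add, tmul_add, hs, ht]

lemma rTensor_comp_mulRTensor (γ : N →ₗ[K] N' ⊗[K] B) (f : N' →ₗ[K] N'') :
    rTensor B f ∘ₗ A.mulRTensor γ = A.mulRTensor (rTensor B f ∘ₗ γ) := by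
  apply TensorProduct.ext'
  intro n b
  simp only [mulRTensor, comp_apply, rTensor_tmul]
  induction γ n using TensorProduct.induction_on with
  | zero => simp
  | tmul x y => simp
  | add s t hs ht => simp only [map_add, add_tmul, hs, ht]

lemma braid_tmul_mul (x y z : B) :
    A.braid (x ⊗ₜ A.mul (y ⊗ₜ z))
      = A.mulLTensor (A.braid ∘ₗ (TensorProduct.mk K B B).flip z) (A.braid (x ⊗ₜ y)) := by
  have h := LinearMap.congr_fun A.braid_mul_right (x ⊗ₜ (y ⊗ₜ z))
  simp only [comp_apply, lTensor_tmul, LinearEquiv.coe_coe, assoc_symm_tmul,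
    rTensor_tmul] at h
  rw [h, mulLTensor]
  induction A.braid (x ⊗ₜ y) using TensorProduct.induction_on with
  | zero => simp
  | tmul u v => simp
  | add s t hs ht => simp only [map_add, add_tmul, hs, ht]

lemma braid_mul_tmul (x y z : B) :
    A.braid (A.mul (x ⊗ₜ y) ⊗ₜ z)
      = A.mulRTensor (A.braid ∘ₗ TensorProduct.mk K B B x) (A.braid (y ⊗ₜ z)) := by
  have h := LinearMap.congr_fun A.braid_mul_left ((x ⊗ₜ y) ⊗ₜ z)
  simp only [comp_apply, rTensor_tmul, LinearEquiv.coe_coe, assoc_tmul,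
    lTensor_tmul] at h
  rw [h, mulRTensor]
  induction A.braid (y ⊗ₜ z) using TensorProduct.induction_on with
  | zero => simp
  | tmul u v => simp
  | add s t hs ht => simp only [map_add, tmul_add, hs, ht]

end BB

section

variable {K}

lemma GeneratesAlgebra.eq_top_of_le {A : BB K B} {V S : Submodule K B}
    (hgen : GeneratesAlgebra K A V) (hV : V ≤ S) (hone : A.unit 1 ∈ S)
    (hmul : ∀ x ∈ S, ∀ y ∈ S, A.mul (x ⊗ₜ y) ∈ S) : S = ⊤ := by
  rw [eq_top_iff, ← hgen, iSup_le_iff]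
  intro n
  induction n with
  | zero =>
    rintro _ ⟨k, rfl⟩
    simpa [← map_smul] using S.smul_mem k hone
  | succ n ih =>
    rw [powSub, mulSub, Submodule.map_le_iff_le_comap, TensorProduct.range_map_eq_span_tmul,
      Submodule.span_le]
    rintro _ ⟨x, v, rfl⟩
    exact hmul _ (ih x.2) _ (hV v.2)

section PB

variable {P : Type*} [AddCommGroup P] [Module K P] (cPB : P ⊗[K] B →ₗ[K] B ⊗[K] P)

def commLocusPB (j : P →ₗ[K] P) : Submodule K B where
  carrier := {z | ∀ p, cPB (j p ⊗ₜ z) = lTensor B j (cPB (p ⊗ₜ z))}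
  zero_mem' := by simp
  add_mem' hy hz p := by simp only [tmul_add, map_add, hy p, hz p]
  smul_mem' k z hz p := by simp only [tmul_smul, map_smul, hz p]

lemma commLocusPB_eq_top_iff (j : P →ₗ[K] P) :
    commLocusPB cPB j = ⊤ ↔ cPB ∘ₗ rTensor B j = lTensor B j ∘ₗ cPB := by
  refine ⟨fun h => TensorProduct.ext' fun p z => ?_, fun h => eq_top_iff.2 fun z _ p => ?_⟩
  · exact (h ▸ Submodule.mem_top : z ∈ commLocusPB cPB j) p
  · exact LinearMap.congr_fun h (p ⊗ₜ z)

end PB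

section PrimPB

variable {A : BB K B} {P : Submodule K B} {cPB : P ⊗[K] B →ₗ[K] B ⊗[K] P}
  (hcPB : lTensor B P.subtype ∘ₗ cPB = A.braid ∘ₗ rTensor B P.subtype)
include hcPB

lemma lTensor_subtype_cPB_tmul (p : P) (z : B) :
    lTensor B P.subtype (cPB (p ⊗ₜ z)) = A.braid (p ⊗ₜ z) := by
  simpa using LinearMap.congr_fun hcPB (p ⊗ₜ z)

lemma cPB_tmul_unit (p : P) : cPB (p ⊗ₜ A.unit 1) = A.unit 1 ⊗ₜ p := by
  apply Module.Flat.lTensor_preserves_injective_linearMap _ P.injective_subtype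
  rw [lTensor_subtype_cPB_tmul hcPB, A.braid_unit_right, lTensor_tmul, Submodule.subtype_apply]

lemma cPB_tmul_mul (p : P) (y z : B) :
    cPB (p ⊗ₜ A.mul (y ⊗ₜ z))
      = A.mulLTensor (cPB ∘ₗ (TensorProduct.mk K P B).flip z) (cPB (p ⊗ₜ y)) := by
  apply Module.Flat.lTensor_preserves_injective_linearMap _ P.injective_subtype
  have hz : lTensor B P.subtype ∘ₗ cPB ∘ₗ (TensorProduct.mk K P B).flip z
      = (A.braid ∘ₗ (TensorProduct.mk K B B).flip z) ∘ₗ P.subtype := by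
    rw [← comp_assoc, hcPB]; rfl
  rw [← comp_apply (lTensor B P.subtype) (A.mulLTensor _), A.lTensor_comp_mulLTensor, hz,
    A.mulLTensor_comp, comp_apply, lTensor_subtype_cPB_tmul hcPB,
    lTensor_subtype_cPB_tmul hcPB, A.braid_tmul_mul]

lemma unit_mem_commLocusPB (j : P →ₗ[K] P) : A.unit 1 ∈ commLocusPB cPB j := fun p => by
  rw [cPB_tmul_unit hcPB, cPB_tmul_unit hcPB, lTensor_tmul]

lemma mul_mem_commLocusPB {j : P →ₗ[K] P} {y z : B} (hy : y ∈ commLocusPB cPB j)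
    (hz : z ∈ commLocusPB cPB j) : A.mul (y ⊗ₜ z) ∈ commLocusPB cPB j := fun p => by
  have hz' : cPB ∘ₗ (TensorProduct.mk K P B).flip z ∘ₗ j
      = lTensor B j ∘ₗ cPB ∘ₗ (TensorProduct.mk K P B).flip z := LinearMap.ext hz
  rw [cPB_tmul_mul hcPB, cPB_tmul_mul hcPB, hy p, ← comp_apply (A.mulLTensor _),
    ← A.mulLTensor_comp, comp_assoc, hz', ← A.lTensor_comp_mulLTensor, comp_apply]

variable {W : Submodule K B}

lemma le_commLocusPB_iff (hWP : W ≤ P) {cWW : W ⊗[K] W →ₗ[K] W ⊗[K] W}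
    (hcWW : TensorProduct.map W.subtype W.subtype ∘ₗ cWW
      = A.braid ∘ₗ TensorProduct.map W.subtype W.subtype)
    {cPW : P ⊗[K] W →ₗ[K] W ⊗[K] P}
    (hcPW : TensorProduct.map W.subtype P.subtype ∘ₗ cPW
      = A.braid ∘ₗ TensorProduct.map P.subtype W.subtype)
    (b : P →ₗ[K] W) :
    W ≤ commLocusPB cPB (Submodule.inclusion hWP ∘ₗ b)
      ↔ cWW ∘ₗ rTensor W b = lTensor W b ∘ₗ cPW := by
  have hinjP := Module.Flat.lTensor_preserves_injective_linearMap (M := B) _ P.injective_subtype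
  have hinjW := TensorProduct.map_injective_of_flat_flat _ _ W.injective_subtype W.injective_subtype
  have hcPW' (p : P) (w : W) : cPB (p ⊗ₜ (w : B)) = rTensor P W.subtype (cPW (p ⊗ₜ w)) := by
    apply hinjP
    simpa [lTensor_subtype_cPB_tmul hcPB, ← comp_apply (lTensor B P.subtype)] using
      (LinearMap.congr_fun hcPW (p ⊗ₜ w)).symm
  calc W ≤ commLocusPB cPB (Submodule.inclusion hWP ∘ₗ b)
      ↔ ∀ (w : W) p, cPB (Submodule.inclusion hWP (b p) ⊗ₜ (w : B))
          = lTensor B (Submodule.inclusion hWP ∘ₗ b) (cPB (p ⊗ₜ (w : B))) :=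
        ⟨fun h w p => h w.2 p, fun h w hw p => h ⟨w, hw⟩ p⟩
    _ ↔ ∀ (w : W) p, A.braid ((b p : B) ⊗ₜ (w : B))
          = TensorProduct.map W.subtype (W.subtype ∘ₗ b) (cPW (p ⊗ₜ w)) := by
      refine forall_congr' fun w => forall_congr' fun p => ?_
      rw [← hinjP.eq_iff, lTensor_subtype_cPB_tmul hcPB, hcPW', ← comp_apply (lTensor B _),
        ← lTensor_comp, ← comp_apply (lTensor B _), lTensor_comp_rTensor, ← comp_assoc,
        Submodule.subtype_comp_inclusion, Submodule.coe_inclusion]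
    _ ↔ ∀ p (w : W), cWW (b p ⊗ₜ w) = lTensor W b (cPW (p ⊗ₜ w)) := by
      rw [forall_comm]
      refine forall_congr' fun p => forall_congr' fun w => ?_
      rw [← hinjW.eq_iff, ← comp_apply (map _ _) cWW, hcWW, comp_apply, map_tmul, map_lTensor]
      rfl
    _ ↔ cWW ∘ₗ rTensor W b = lTensor W b ∘ₗ cPW :=
      ⟨fun h => TensorProduct.ext' h, fun h p w => LinearMap.congr_fun h (p ⊗ₜ w)⟩

end PrimPB

section BP

variable {P : Type*} [AddCommGroup P] [Module K P] (cBP : B ⊗[K] P →ₗ[K] P ⊗[K] B)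

def commLocusBP (j : P →ₗ[K] P) : Submodule K B where
  carrier := {x | ∀ p, cBP (x ⊗ₜ j p) = rTensor B j (cBP (x ⊗ₜ p))}
  zero_mem' := by simp
  add_mem' hx hy p := by simp only [add_tmul, map_add, hx p, hy p]
  smul_mem' k x hx p := by simp only [← smul_tmul', map_smul, hx p]

lemma commLocusBP_eq_top_iff (j : P →ₗ[K] P) :
    commLocusBP cBP j = ⊤ ↔ cBP ∘ₗ lTensor B j = rTensor B j ∘ₗ cBP := by
  refine ⟨fun h => TensorProduct.ext' fun x p => ?_, fun h => eq_top_iff.2 fun x _ p => ?_⟩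
  · exact (h ▸ Submodule.mem_top : x ∈ commLocusBP cBP j) p
  · exact LinearMap.congr_fun h (x ⊗ₜ p)

end BP

section PrimBP

variable {A : BB K B} {P : Submodule K B} {cBP : B ⊗[K] P →ₗ[K] P ⊗[K] B}
  (hcBP : rTensor B P.subtype ∘ₗ cBP = A.braid ∘ₗ lTensor B P.subtype)
include hcBP

lemma rTensor_subtype_cBP_tmul (x : B) (p : P) :
    rTensor B P.subtype (cBP (x ⊗ₜ p)) = A.braid (x ⊗ₜ p) := by
  simpa using LinearMap.congr_fun hcBP (x ⊗ₜ p)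

lemma cBP_unit_tmul (p : P) : cBP (A.unit 1 ⊗ₜ p) = p ⊗ₜ A.unit 1 := by
  apply Module.Flat.rTensor_preserves_injective_linearMap _ P.injective_subtype
  rw [rTensor_subtype_cBP_tmul hcBP, A.braid_unit_left, rTensor_tmul, Submodule.subtype_apply]

lemma cBP_mul_tmul (x y : B) (p : P) :
    cBP (A.mul (x ⊗ₜ y) ⊗ₜ p)
      = A.mulRTensor (cBP ∘ₗ TensorProduct.mk K B P x) (cBP (y ⊗ₜ p)) := by
  apply Module.Flat.rTensor_preserves_injective_linearMap _ P.injective_subtype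
  have hx : rTensor B P.subtype ∘ₗ cBP ∘ₗ TensorProduct.mk K B P x
      = (A.braid ∘ₗ TensorProduct.mk K B B x) ∘ₗ P.subtype := by
    rw [← comp_assoc, hcBP]; rfl
  rw [← comp_apply (rTensor B P.subtype) (A.mulRTensor _), A.rTensor_comp_mulRTensor, hx,
    A.mulRTensor_comp, comp_apply, rTensor_subtype_cBP_tmul hcBP,
    rTensor_subtype_cBP_tmul hcBP, A.braid_mul_tmul]

lemma unit_mem_commLocusBP (j : P →ₗ[K] P) : A.unit 1 ∈ commLocusBP cBP j := fun p => by
  rw [cBP_unit_tmul hcBP, cBP_unit_tmul hcBP, rTensor_tmul]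

lemma mul_mem_commLocusBP {j : P →ₗ[K] P} {x y : B} (hx : x ∈ commLocusBP cBP j)
    (hy : y ∈ commLocusBP cBP j) : A.mul (x ⊗ₜ y) ∈ commLocusBP cBP j := fun p => by
  have hx' : cBP ∘ₗ TensorProduct.mk K B P x ∘ₗ j
      = rTensor B j ∘ₗ cBP ∘ₗ TensorProduct.mk K B P x := LinearMap.ext hx
  rw [cBP_mul_tmul hcBP, cBP_mul_tmul hcBP, hy p, ← comp_apply (A.mulRTensor _),
    ← A.mulRTensor_comp, comp_assoc, hx', ← A.rTensor_comp_mulRTensor, comp_apply]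

variable {W : Submodule K B}

lemma le_commLocusBP_iff (hWP : W ≤ P) {cWW : W ⊗[K] W →ₗ[K] W ⊗[K] W}
    (hcWW : TensorProduct.map W.subtype W.subtype ∘ₗ cWW
      = A.braid ∘ₗ TensorProduct.map W.subtype W.subtype)
    {cWP : W ⊗[K] P →ₗ[K] P ⊗[K] W}
    (hcWP : TensorProduct.map P.subtype W.subtype ∘ₗ cWP
      = A.braid ∘ₗ TensorProduct.map W.subtype P.subtype)
    (b : P →ₗ[K] W) :
    W ≤ commLocusBP cBP (Submodule.inclusion hWP ∘ₗ b)
      ↔ cWW ∘ₗ lTensor W b = rTensor W b ∘ₗ cWP := by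
  have hinjP := Module.Flat.rTensor_preserves_injective_linearMap (M := B) _ P.injective_subtype
  have hinjW := TensorProduct.map_injective_of_flat_flat _ _ W.injective_subtype W.injective_subtype
  have hcWP' (w : W) (p : P) : cBP ((w : B) ⊗ₜ p) = lTensor P W.subtype (cWP (w ⊗ₜ p)) := by
    apply hinjP
    simpa [rTensor_subtype_cBP_tmul hcBP, ← comp_apply (rTensor B P.subtype)] using
      (LinearMap.congr_fun hcWP (w ⊗ₜ p)).symm
  calc W ≤ commLocusBP cBP (Submodule.inclusion hWP ∘ₗ b)
      ↔ ∀ (w : W) p, cBP ((w : B) ⊗ₜ Submodule.inclusion hWP (b p))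
          = rTensor B (Submodule.inclusion hWP ∘ₗ b) (cBP ((w : B) ⊗ₜ p)) :=
        ⟨fun h w p => h w.2 p, fun h w hw p => h ⟨w, hw⟩ p⟩
    _ ↔ ∀ (w : W) p, A.braid ((w : B) ⊗ₜ (b p : B))
          = TensorProduct.map (W.subtype ∘ₗ b) W.subtype (cWP (w ⊗ₜ p)) := by
      refine forall_congr' fun w => forall_congr' fun p => ?_
      rw [← hinjP.eq_iff, rTensor_subtype_cBP_tmul hcBP, hcWP', ← comp_apply (rTensor B _),
        ← rTensor_comp, ← comp_apply (rTensor B _), rTensor_comp_lTensor, ← comp_assoc,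
        Submodule.subtype_comp_inclusion, Submodule.coe_inclusion]
    _ ↔ ∀ (w : W) p, cWW (w ⊗ₜ b p) = rTensor W b (cWP (w ⊗ₜ p)) := by
      refine forall_congr' fun w => forall_congr' fun p => ?_
      rw [← hinjW.eq_iff, ← comp_apply (map _ _) cWW, hcWW, comp_apply, map_tmul, map_rTensor]
      rfl
    _ ↔ cWW ∘ₗ lTensor W b = rTensor W b ∘ₗ cWP :=
      ⟨fun h => TensorProduct.ext' h, fun h w p => LinearMap.congr_fun h (w ⊗ₜ p)⟩

end PrimBP

end

theorem stmt_10 {B : Type*} [AddCommGroup B] [Module K B] (A : BB K B)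
    (V : Submodule K B) (hVP : V ≤ Prim K A)
    (hgen : GeneratesAlgebra K A V)
    (cPB : ↥(Prim K A) ⊗[K] B →ₗ[K] B ⊗[K] ↥(Prim K A))
    (cBP : B ⊗[K] ↥(Prim K A) →ₗ[K] ↥(Prim K A) ⊗[K] B)
    (hcPB : lTensor B (Prim K A).subtype ∘ₗ cPB = A.braid ∘ₗ rTensor B (Prim K A).subtype)
    (hcBP : rTensor B (Prim K A).subtype ∘ₗ cBP = A.braid ∘ₗ lTensor B (Prim K A).subtype)
    (cVV : ↥V ⊗[K] ↥V →ₗ[K] ↥V ⊗[K] ↥V)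
    (hcVV : TensorProduct.map V.subtype V.subtype ∘ₗ cVV
        = A.braid ∘ₗ TensorProduct.map V.subtype V.subtype)
    (cPV : ↥(Prim K A) ⊗[K] ↥V →ₗ[K] ↥V ⊗[K] ↥(Prim K A))
    (hcPV : TensorProduct.map V.subtype (Prim K A).subtype ∘ₗ cPV
        = A.braid ∘ₗ TensorProduct.map (Prim K A).subtype V.subtype)
    (cVP : ↥V ⊗[K] ↥(Prim K A) →ₗ[K] ↥(Prim K A) ⊗[K] ↥V)
    (hcVP : TensorProduct.map (Prim K A).subtype V.subtype ∘ₗ cVP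
        = A.braid ∘ₗ TensorProduct.map V.subtype (Prim K A).subtype)
    (b : ↥(Prim K A) →ₗ[K] ↥V) :
    (cPB ∘ₗ rTensor B (Submodule.inclusion hVP ∘ₗ b)
        = lTensor B (Submodule.inclusion hVP ∘ₗ b) ∘ₗ cPB ∧
     cBP ∘ₗ lTensor B (Submodule.inclusion hVP ∘ₗ b)
        = rTensor B (Submodule.inclusion hVP ∘ₗ b) ∘ₗ cBP)
    ↔ (cVV ∘ₗ rTensor ↥V b = lTensor ↥V b ∘ₗ cPV ∧
       cVV ∘ₗ lTensor ↥V b = rTensor ↥V b ∘ₗ cVP) := by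
  rw [← commLocusPB_eq_top_iff, ← commLocusBP_eq_top_iff, ← le_commLocusPB_iff hcPB hVP hcVV hcPV,
    ← le_commLocusBP_iff hcBP hVP hcVV hcVP]
  refine ⟨fun ⟨hPB, hBP⟩ => ⟨hPB ▸ le_top, hBP ▸ le_top⟩, fun ⟨hPB, hBP⟩ => ⟨?_, ?_⟩⟩
  · exact hgen.eq_top_of_le hPB (unit_mem_commLocusPB hcPB _)
      fun _ hy _ hz => mul_mem_commLocusPB hcPB hy hz
  · exact hgen.eq_top_of_le hBP (unit_mem_commLocusBP hcBP _)
      fun _ hx _ hy => mul_mem_commLocusBP hcBP hx hy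
end
end

section
/- Let (V, c) be a braided vector space over a field K and let (B, γ) be a (V,c)-bialgebra, so γ(V) is a categorical subspace of (B, c_B) contained in P(B). Suppose b : P(B) → V is a K-linear map such that c_{γ(V)}(γb⊗id_{γ(V)}) = (id_{γ(V)}⊗γb)c_{P(B),γ(V)} and c_{γ(V)}(id_{γ(V)}⊗γb) = (γb⊗id_{γ(V)})c_{γ(V),P(B)}, where the subscripted maps are induced by the braiding c_B. Then the two-sided ideal of B generated by (Id − γb)(P(B)) is a braided ideal, the quotient W := B/((Id − γb)(P(B))) carries a unique braided bialgebra structure such that the canonical projection π : B → W is a morphism of braided bialgebras, and the map P(π)∘γ : V → P(W) induced by π makes (W, P(π)∘γ) a (V,c)-bialgebra. -/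
open TensorProduct LinearMap

noncomputable section

variable (K : Type*) [Field K]

variable {B B' : Type*} [AddCommGroup B] [Module K B] [AddCommGroup B'] [Module K B']

section Aux
variable {K : Type*} [Field K] {B : Type*} [AddCommGroup B] [Module K B]
variable {M2 : Type*} [AddCommGroup M2] [Module K M2]

lemma mem_lT {L : Submodule K B} {x : B} (hx : x ∈ L) (y : B) : x ⊗ₜ[K] y ∈ lT K L :=
  ⟨(⟨x, hx⟩ : L) ⊗ₜ[K] y, rfl⟩

lemma mem_rT {L : Submodule K B} {x : B} (hx : x ∈ L) (y : B) : y ⊗ₜ[K] x ∈ rT K L :=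
  ⟨y ⊗ₜ[K] (⟨x, hx⟩ : L), rfl⟩

lemma lT_induction {L : Submodule K B} (F : B ⊗[K] B →ₗ[K] M2) {Q : Submodule K M2}
    (h : ∀ x ∈ L, ∀ y, F (x ⊗ₜ[K] y) ∈ Q) {e : B ⊗[K] B} (he : e ∈ lT K L) : F e ∈ Q := by
  obtain ⟨w, rfl⟩ := he
  induction w using TensorProduct.induction_on with
  | zero => simpa using Q.zero_mem
  | tmul x y => simpa using h x.1 x.2 y
  | add a b ha hb => rw [map_add, map_add]; exact Q.add_mem ha hb

lemma rT_induction {L : Submodule K B} (F : B ⊗[K] B →ₗ[K] M2) {Q : Submodule K M2}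
    (h : ∀ x ∈ L, ∀ y, F (y ⊗ₜ[K] x) ∈ Q) {e : B ⊗[K] B} (he : e ∈ rT K L) : F e ∈ Q := by
  obtain ⟨w, rfl⟩ := he
  induction w using TensorProduct.induction_on with
  | zero => simpa using Q.zero_mem
  | tmul y x => simpa using h x.1 x.2 y
  | add a b ha hb => rw [map_add, map_add]; exact Q.add_mem ha hb

lemma tensor_induction (F : B ⊗[K] B →ₗ[K] M2) {Q : Submodule K M2}
    (h : ∀ x y, F (x ⊗ₜ[K] y) ∈ Q) (e : B ⊗[K] B) : F e ∈ Q := by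
  induction e using TensorProduct.induction_on with
  | zero => simpa using Q.zero_mem
  | tmul x y => exact h x y
  | add a b ha hb => rw [map_add]; exact Q.add_mem ha hb

lemma mem_mulSub (A : BB K B) {M N : Submodule K B} {x y : B} (hx : x ∈ M) (hy : y ∈ N) :
    A.mul (x ⊗ₜ[K] y) ∈ mulSub K A M N :=
  ⟨TensorProduct.map M.subtype N.subtype ((⟨x, hx⟩ : M) ⊗ₜ[K] (⟨y, hy⟩ : N)),
    ⟨_, rfl⟩, rfl⟩

lemma mulSub_induction (A : BB K B) {M N : Submodule K B} (F : B →ₗ[K] M2) {Q : Submodule K M2}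
    (h : ∀ x ∈ M, ∀ y ∈ N, F (A.mul (x ⊗ₜ[K] y)) ∈ Q) {e : B} (he : e ∈ mulSub K A M N) :
    F e ∈ Q := by
  obtain ⟨w, ⟨w', rfl⟩, rfl⟩ := he
  induction w' using TensorProduct.induction_on with
  | zero => simpa using Q.zero_mem
  | tmul x y => simpa using h x.1 x.2 y.1 y.2
  | add a b ha hb => rw [map_add, map_add, map_add]; exact Q.add_mem ha hb

lemma mulSub_le (A : BB K B) {M N Q : Submodule K B}
    (h : ∀ x ∈ M, ∀ y ∈ N, A.mul (x ⊗ₜ[K] y) ∈ Q) : mulSub K A M N ≤ Q :=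
  fun _ he => mulSub_induction A LinearMap.id h he

end Aux
section Aux2
variable {K : Type*} [Field K] {B : Type*} [AddCommGroup B] [Module K B] (A : BB K B)

lemma mul_assoc_apply (x y z : B) :
    A.mul (A.mul (x ⊗ₜ[K] y) ⊗ₜ[K] z) = A.mul (x ⊗ₜ[K] A.mul (y ⊗ₜ[K] z)) := by
  simpa using LinearMap.congr_fun A.mul_assoc' ((x ⊗ₜ[K] y) ⊗ₜ[K] z)

lemma braid_mul_left_apply (x y z : B) :
    A.braid (A.mul (x ⊗ₜ[K] y) ⊗ₜ[K] z)
      = (lTensor B A.mul ∘ₗ (TensorProduct.assoc K B B B).toLinearMap ∘ₗ rTensor B A.braid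
          ∘ₗ (TensorProduct.assoc K B B B).symm.toLinearMap)
        (x ⊗ₜ[K] A.braid (y ⊗ₜ[K] z)) := by
  simpa using LinearMap.congr_fun A.braid_mul_left ((x ⊗ₜ[K] y) ⊗ₜ[K] z)

lemma braid_mul_right_apply (x y z : B) :
    A.braid (x ⊗ₜ[K] A.mul (y ⊗ₜ[K] z))
      = (rTensor B A.mul ∘ₗ (TensorProduct.assoc K B B B).symm.toLinearMap ∘ₗ lTensor B A.braid
          ∘ₗ (TensorProduct.assoc K B B B).toLinearMap)
        (A.braid (x ⊗ₜ[K] y) ⊗ₜ[K] z) := by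
  simpa using LinearMap.congr_fun A.braid_mul_right (x ⊗ₜ[K] (y ⊗ₜ[K] z))

lemma lcat_mul {M N M' N' : Submodule K B}
    (hM : ∀ x ∈ M, ∀ y : B, A.braid (x ⊗ₜ[K] y) ∈ rT K M')
    (hN : ∀ x ∈ N, ∀ y : B, A.braid (x ⊗ₜ[K] y) ∈ rT K N') :
    ∀ w ∈ mulSub K A M N, ∀ y : B, A.braid (w ⊗ₜ[K] y) ∈ rT K (mulSub K A M' N') := by
  intro w hw y
  refine mulSub_induction A (A.braid ∘ₗ (TensorProduct.mk K B B).flip y) ?_ hw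
  intro m hm n hn
  simp only [LinearMap.comp_apply, LinearMap.flip_apply, TensorProduct.mk_apply]
  rw [braid_mul_left_apply]
  refine rT_induction
    ((lTensor B A.mul ∘ₗ (TensorProduct.assoc K B B B).toLinearMap ∘ₗ rTensor B A.braid
        ∘ₗ (TensorProduct.assoc K B B B).symm.toLinearMap)
      ∘ₗ TensorProduct.mk K B (B ⊗[K] B) m) ?_ (hN n hn y)
  intro n' hn' b
  simp only [LinearMap.comp_apply, TensorProduct.mk_apply, LinearEquiv.coe_coe,
    TensorProduct.assoc_symm_tmul, rTensor_tmul]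
  refine rT_induction
    ((lTensor B A.mul ∘ₗ (TensorProduct.assoc K B B B).toLinearMap)
      ∘ₗ (TensorProduct.mk K (B ⊗[K] B) B).flip n') ?_ (hM m hm b)
  intro m' hm' a
  simp only [LinearMap.comp_apply, LinearMap.flip_apply, TensorProduct.mk_apply,
    LinearEquiv.coe_coe, TensorProduct.assoc_tmul, lTensor_tmul]
  exact mem_rT (mem_mulSub A hm' hn') a

lemma rcat_mul {M N M' N' : Submodule K B}
    (hM : ∀ x ∈ M, ∀ y : B, A.braid (y ⊗ₜ[K] x) ∈ lT K M')
    (hN : ∀ x ∈ N, ∀ y : B, A.braid (y ⊗ₜ[K] x) ∈ lT K N') :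
    ∀ w ∈ mulSub K A M N, ∀ y : B, A.braid (y ⊗ₜ[K] w) ∈ lT K (mulSub K A M' N') := by
  intro w hw y
  refine mulSub_induction A (A.braid ∘ₗ TensorProduct.mk K B B y) ?_ hw
  intro m hm n hn
  simp only [LinearMap.comp_apply, TensorProduct.mk_apply]
  rw [braid_mul_right_apply]
  refine lT_induction
    ((rTensor B A.mul ∘ₗ (TensorProduct.assoc K B B B).symm.toLinearMap ∘ₗ lTensor B A.braid
        ∘ₗ (TensorProduct.assoc K B B B).toLinearMap)
      ∘ₗ (TensorProduct.mk K (B ⊗[K] B) B).flip n) ?_ (hM m hm y)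
  intro m' hm' y'
  simp only [LinearMap.comp_apply, LinearMap.flip_apply, TensorProduct.mk_apply,
    LinearEquiv.coe_coe, TensorProduct.assoc_tmul, lTensor_tmul]
  refine lT_induction
    ((rTensor B A.mul ∘ₗ (TensorProduct.assoc K B B B).symm.toLinearMap)
      ∘ₗ TensorProduct.mk K B (B ⊗[K] B) m') ?_ (hN n hn y')
  intro n' hn' y''
  simp only [LinearMap.comp_apply, TensorProduct.mk_apply, LinearEquiv.coe_coe,
    TensorProduct.assoc_symm_tmul, rTensor_tmul]
  exact mem_lT (mem_mulSub A hm' hn') y''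

/-- The categoricity of `S` propagates from generators to the whole algebra. -/
lemma scat_of_gen {S G : Submodule K B} (hgen : GeneratesAlgebra K A G)
    (hSG : ∀ s ∈ S, ∀ g ∈ G, A.braid (s ⊗ₜ[K] g) ∈ rT K S ∧ A.braid (g ⊗ₜ[K] s) ∈ lT K S) :
    ∀ s ∈ S, ∀ y : B, A.braid (s ⊗ₜ[K] y) ∈ rT K S ∧ A.braid (y ⊗ₜ[K] s) ∈ lT K S := by
  set R : Submodule K B :=
    { carrier := {y | ∀ s ∈ S, A.braid (s ⊗ₜ[K] y) ∈ rT K S ∧ A.braid (y ⊗ₜ[K] s) ∈ lT K S}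
      add_mem' := by
        intro a b ha hb s hs
        constructor
        · rw [TensorProduct.tmul_add, map_add]; exact Submodule.add_mem _ (ha s hs).1 (hb s hs).1
        · rw [TensorProduct.add_tmul, map_add]; exact Submodule.add_mem _ (ha s hs).2 (hb s hs).2
      zero_mem' := by
        intro s hs
        constructor
        · rw [TensorProduct.tmul_zero, map_zero]; exact Submodule.zero_mem _
        · rw [TensorProduct.zero_tmul, map_zero]; exact Submodule.zero_mem _
      smul_mem' := by
        intro k y hy s hs
        constructor
        · rw [TensorProduct.tmul_smul, map_smul]; exact Submodule.smul_mem _ _ (hy s hs).1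
        · rw [← TensorProduct.smul_tmul', map_smul]; exact Submodule.smul_mem _ _ (hy s hs).2 }
    with hR
  have hunit : A.unit 1 ∈ R := by
    intro s hs
    rw [A.braid_unit_right s, A.braid_unit_left s]
    exact ⟨mem_rT hs _, mem_lT hs _⟩
  have hmul : ∀ y ∈ R, ∀ z ∈ R, A.mul (y ⊗ₜ[K] z) ∈ R := by
    intro y hy z hz s hs
    constructor
    · rw [braid_mul_right_apply]
      refine rT_induction
        ((rTensor B A.mul ∘ₗ (TensorProduct.assoc K B B B).symm.toLinearMap
            ∘ₗ lTensor B A.braid ∘ₗ (TensorProduct.assoc K B B B).toLinearMap)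
          ∘ₗ (TensorProduct.mk K (B ⊗[K] B) B).flip z) ?_ ((hy s hs).1)
      intro s' hs' b
      simp only [LinearMap.comp_apply, LinearMap.flip_apply, TensorProduct.mk_apply,
        LinearEquiv.coe_coe, TensorProduct.assoc_tmul, lTensor_tmul]
      refine rT_induction
        ((rTensor B A.mul ∘ₗ (TensorProduct.assoc K B B B).symm.toLinearMap)
          ∘ₗ TensorProduct.mk K B (B ⊗[K] B) b) ?_ ((hz s' hs').1)
      intro s'' hs'' b'
      simp only [LinearMap.comp_apply, TensorProduct.mk_apply, LinearEquiv.coe_coe,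
        TensorProduct.assoc_symm_tmul, rTensor_tmul]
      exact mem_rT hs'' _
    · rw [braid_mul_left_apply]
      refine lT_induction
        ((lTensor B A.mul ∘ₗ (TensorProduct.assoc K B B B).toLinearMap ∘ₗ rTensor B A.braid
            ∘ₗ (TensorProduct.assoc K B B B).symm.toLinearMap)
          ∘ₗ TensorProduct.mk K B (B ⊗[K] B) y) ?_ ((hz s hs).2)
      intro s' hs' z'
      simp only [LinearMap.comp_apply, TensorProduct.mk_apply, LinearEquiv.coe_coe,
        TensorProduct.assoc_symm_tmul, rTensor_tmul]
      refine lT_induction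
        ((lTensor B A.mul ∘ₗ (TensorProduct.assoc K B B B).toLinearMap)
          ∘ₗ (TensorProduct.mk K (B ⊗[K] B) B).flip z') ?_ ((hy s' hs').2)
      intro s'' hs'' y''
      simp only [LinearMap.comp_apply, LinearMap.flip_apply, TensorProduct.mk_apply,
        LinearEquiv.coe_coe, TensorProduct.assoc_tmul, lTensor_tmul]
      exact mem_lT hs'' _
  have hpow : ∀ n, powSub K A G n ≤ R := by
    intro n
    induction n with
    | zero =>
      rintro x ⟨k, rfl⟩
      have : A.unit k = k • A.unit 1 := by rw [← map_smul]; simp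
      rw [this]
      exact R.smul_mem _ hunit
    | succ n ih =>
      refine mulSub_le A ?_
      intro x hx g hg
      exact hmul x (ih hx) g (fun s hs => ⟨(hSG s hs g hg).1, (hSG s hs g hg).2⟩)
  have hRtop : (⊤ : Submodule K B) ≤ R := by
    rw [← hgen]
    exact iSup_le hpow
  intro s hs y
  exact hRtop (Submodule.mem_top) s hs

end Aux2
section Aux3
variable {K : Type*} [Field K] {B : Type*} [AddCommGroup B] [Module K B] (A : BB K B)

/-- The right-hand side of `comul_mul'` without the `Δ ⊗ Δ` part. -/
def PhiBB : (B ⊗[K] B) ⊗[K] (B ⊗[K] B) →ₗ[K] B ⊗[K] B :=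
  TensorProduct.map A.mul A.mul
    ∘ₗ (TensorProduct.assoc K (B ⊗[K] B) B B).toLinearMap
    ∘ₗ rTensor B ((TensorProduct.assoc K B B B).symm.toLinearMap)
    ∘ₗ rTensor B (lTensor B A.braid)
    ∘ₗ rTensor B ((TensorProduct.assoc K B B B).toLinearMap)
    ∘ₗ (TensorProduct.assoc K (B ⊗[K] B) B B).symm.toLinearMap

lemma comul_mul_apply (x y : B) :
    A.comul (A.mul (x ⊗ₜ[K] y)) = PhiBB A (A.comul x ⊗ₜ[K] A.comul y) := by
  simpa [PhiBB] using LinearMap.congr_fun A.comul_mul' (x ⊗ₜ[K] y)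

/-- `theta a v (e₁ ⊗ e₂) = (a·e₁) ⊗ (e₂·v)`. -/
def theta (a v : B) : B ⊗[K] B →ₗ[K] B ⊗[K] B :=
  TensorProduct.map (A.mul ∘ₗ TensorProduct.mk K B B a)
    (A.mul ∘ₗ (TensorProduct.mk K B B).flip v)

lemma theta_tmul (a v e₁ e₂ : B) :
    theta A a v (e₁ ⊗ₜ[K] e₂) = A.mul (a ⊗ₜ[K] e₁) ⊗ₜ[K] A.mul (e₂ ⊗ₜ[K] v) := rfl

lemma theta_eq (a v : B) :
    TensorProduct.map A.mul A.mul
        ∘ₗ (TensorProduct.assoc K (B ⊗[K] B) B B).toLinearMap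
        ∘ₗ rTensor B ((TensorProduct.assoc K B B B).symm.toLinearMap)
        ∘ₗ ((TensorProduct.mk K (B ⊗[K] (B ⊗[K] B)) B).flip v)
        ∘ₗ (TensorProduct.mk K B (B ⊗[K] B) a)
      = theta A a v := by
  apply TensorProduct.ext'
  intro e₁ e₂
  simp [theta]

lemma Phi_tmul (a b u v : B) :
    PhiBB A ((a ⊗ₜ[K] b) ⊗ₜ[K] (u ⊗ₜ[K] v)) = theta A a v (A.braid (b ⊗ₜ[K] u)) := by
  have h := LinearMap.congr_fun (theta_eq A a v) (A.braid (b ⊗ₜ[K] u))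
  simp only [LinearMap.comp_apply, LinearMap.flip_apply, TensorProduct.mk_apply] at h
  rw [← h, PhiBB]
  simp only [LinearMap.comp_apply, LinearEquiv.coe_coe, TensorProduct.assoc_symm_tmul,
    TensorProduct.assoc_tmul, rTensor_tmul, lTensor_tmul]

lemma coideal_mul_left {M MA MB MB' : Submodule K B}
    (hM : ∀ x ∈ M, A.comul x ∈ lT K MA ⊔ rT K MB)
    (hcat : ∀ x ∈ MB, ∀ y : B, A.braid (x ⊗ₜ[K] y) ∈ rT K MB') :
    ∀ x ∈ M, ∀ y : B, A.comul (A.mul (x ⊗ₜ[K] y))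
      ∈ lT K (mulSub K A MA ⊤) ⊔ rT K (mulSub K A MB' ⊤) := by
  intro x hx y
  rw [comul_mul_apply]
  obtain ⟨p, hp, q, hq, hpq⟩ := Submodule.mem_sup.mp (hM x hx)
  rw [← hpq, TensorProduct.add_tmul, map_add]
  refine Submodule.add_mem _ ?_ ?_
  · refine lT_induction (PhiBB A ∘ₗ (TensorProduct.mk K (B ⊗[K] B) (B ⊗[K] B)).flip (A.comul y))
      ?_ hp
    intro a ha x₂
    refine tensor_induction (PhiBB A ∘ₗ TensorProduct.mk K (B ⊗[K] B) (B ⊗[K] B) (a ⊗ₜ[K] x₂))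
      ?_ (A.comul y)
    intro u v
    simp only [LinearMap.comp_apply, TensorProduct.mk_apply, Phi_tmul]
    refine tensor_induction (theta A a v) ?_ (A.braid (x₂ ⊗ₜ[K] u))
    intro e₁ e₂
    rw [theta_tmul]
    exact Submodule.mem_sup_left (mem_lT (mem_mulSub A ha Submodule.mem_top) _)
  · refine rT_induction (PhiBB A ∘ₗ (TensorProduct.mk K (B ⊗[K] B) (B ⊗[K] B)).flip (A.comul y))
      ?_ hq
    intro x₂ hx₂ x₁
    refine tensor_induction (PhiBB A ∘ₗ TensorProduct.mk K (B ⊗[K] B) (B ⊗[K] B) (x₁ ⊗ₜ[K] x₂))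
      ?_ (A.comul y)
    intro u v
    simp only [LinearMap.comp_apply, TensorProduct.mk_apply, Phi_tmul]
    refine rT_induction (theta A x₁ v) ?_ (hcat x₂ hx₂ u)
    intro e₂ he₂ e₁
    rw [theta_tmul]
    exact Submodule.mem_sup_right (mem_rT (mem_mulSub A he₂ Submodule.mem_top) _)

lemma coideal_mul_right {N NA NB NA' : Submodule K B}
    (hN : ∀ y ∈ N, A.comul y ∈ lT K NA ⊔ rT K NB)
    (hcat : ∀ x ∈ NA, ∀ y : B, A.braid (y ⊗ₜ[K] x) ∈ lT K NA') :
    ∀ y ∈ N, ∀ x : B, A.comul (A.mul (x ⊗ₜ[K] y))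
      ∈ lT K (mulSub K A ⊤ NA') ⊔ rT K (mulSub K A ⊤ NB) := by
  intro y hy x
  rw [comul_mul_apply]
  obtain ⟨p, hp, q, hq, hpq⟩ := Submodule.mem_sup.mp (hN y hy)
  rw [← hpq, TensorProduct.tmul_add, map_add]
  refine Submodule.add_mem _ ?_ ?_
  · refine lT_induction (PhiBB A ∘ₗ TensorProduct.mk K (B ⊗[K] B) (B ⊗[K] B) (A.comul x))
      ?_ hp
    intro u hu y₂
    refine tensor_induction
      (PhiBB A ∘ₗ (TensorProduct.mk K (B ⊗[K] B) (B ⊗[K] B)).flip (u ⊗ₜ[K] y₂)) ?_ (A.comul x)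
    intro x₁ x₂
    simp only [LinearMap.comp_apply, TensorProduct.mk_apply, LinearMap.flip_apply, Phi_tmul]
    refine lT_induction (theta A x₁ y₂) ?_ (hcat u hu x₂)
    intro e₁ he₁ e₂
    rw [theta_tmul]
    exact Submodule.mem_sup_left (mem_lT (mem_mulSub A Submodule.mem_top he₁) _)
  · refine rT_induction (PhiBB A ∘ₗ TensorProduct.mk K (B ⊗[K] B) (B ⊗[K] B) (A.comul x))
      ?_ hq
    intro v hv y₁
    refine tensor_induction
      (PhiBB A ∘ₗ (TensorProduct.mk K (B ⊗[K] B) (B ⊗[K] B)).flip (y₁ ⊗ₜ[K] v)) ?_ (A.comul x)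
    intro x₁ x₂
    simp only [LinearMap.comp_apply, TensorProduct.mk_apply, LinearMap.flip_apply, Phi_tmul]
    refine tensor_induction (theta A x₁ v) ?_ (A.braid (x₂ ⊗ₜ[K] y₁))
    intro e₁ e₂
    rw [theta_tmul]
    exact Submodule.mem_sup_right (mem_rT (mem_mulSub A Submodule.mem_top hv) _)

end Aux3
section Aux4
variable {K : Type*} [Field K] {B : Type*} [AddCommGroup B] [Module K B] (A : BB K B)

def rhoBB : B ⊗[K] B →ₗ[K] B := (TensorProduct.rid K B).toLinearMap ∘ₗ lTensor B A.counit
def lamBB : B ⊗[K] B →ₗ[K] B := (TensorProduct.lid K B).toLinearMap ∘ₗ rTensor B A.counit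

lemma rho_tmul (x y : B) : rhoBB A (x ⊗ₜ[K] y) = A.counit y • x := by simp [rhoBB]
lemma lam_tmul (x y : B) : lamBB A (x ⊗ₜ[K] y) = A.counit x • y := by simp [lamBB]

lemma rho_comul (x : B) : rhoBB A (A.comul x) = x := by
  simpa [rhoBB] using LinearMap.congr_fun A.comul_counit' x

lemma lam_comul (x : B) : lamBB A (A.comul x) = x := by
  simpa [lamBB] using LinearMap.congr_fun A.counit_comul' x

lemma rho_braid (w : B ⊗[K] B) : rhoBB A (A.braid w) = lamBB A w := by
  simpa [rhoBB, lamBB] using LinearMap.congr_fun A.counit_braid_right w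

lemma lam_braid (w : B ⊗[K] B) : lamBB A (A.braid w) = rhoBB A w := by
  simpa [rhoBB, lamBB] using LinearMap.congr_fun A.counit_braid_left w

lemma mem_prim_iff {x : B} :
    x ∈ Prim K A ↔ A.comul x = x ⊗ₜ[K] A.unit 1 + A.unit 1 ⊗ₜ[K] x := by
  rw [Prim, LinearMap.mem_ker, LinearMap.sub_apply, LinearMap.sub_apply, sub_sub,
    sub_eq_zero]
  rfl

lemma counit_mul_prim (x : B) {s : B} (hs : s ∈ Prim K A) :
    A.counit (A.mul (x ⊗ₜ[K] s)) = 0 := by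
  have hΔs : A.comul s = s ⊗ₜ[K] A.unit 1 + A.unit 1 ⊗ₜ[K] s := (mem_prim_iff A).mp hs
  set G1 : B ⊗[K] B →ₗ[K] B :=
    (TensorProduct.rid K B).toLinearMap ∘ₗ
      TensorProduct.map LinearMap.id (A.counit ∘ₗ A.mul ∘ₗ (TensorProduct.mk K B B).flip s)
    with hG1
  have G1_tmul : ∀ x₁ x₂ : B, G1 (x₁ ⊗ₜ[K] x₂) = A.counit (A.mul (x₂ ⊗ₜ[K] s)) • x₁ := by
    intro x₁ x₂; simp [hG1]
  have rho_theta : ∀ (x₁ : B) (e : B ⊗[K] B),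
      rhoBB A (theta A x₁ (A.unit 1) e) = A.mul (x₁ ⊗ₜ[K] rhoBB A e) := by
    intro x₁ e
    induction e using TensorProduct.induction_on with
    | zero => simp
    | tmul e₁ e₂ =>
      rw [theta_tmul, rho_tmul, rho_tmul, A.mul_one' e₂, TensorProduct.tmul_smul, map_smul]
    | add a b ha hb => rw [map_add, map_add, ha, hb, map_add, TensorProduct.tmul_add, map_add]
  have key : ∀ w : B ⊗[K] B, rhoBB A (PhiBB A (w ⊗ₜ[K] A.comul s))
      = A.mul (rhoBB A w ⊗ₜ[K] s) + G1 w := by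
    intro w
    induction w using TensorProduct.induction_on with
    | zero => simp
    | add a b ha hb =>
      rw [TensorProduct.add_tmul, map_add, map_add, ha, hb, map_add, map_add,
        TensorProduct.add_tmul, map_add]
      abel
    | tmul x₁ x₂ =>
      rw [hΔs, TensorProduct.tmul_add, map_add, map_add, Phi_tmul, Phi_tmul,
        A.braid_unit_right x₂, theta_tmul, rho_theta, rho_braid, lam_tmul,
        A.mul_one' x₁, rho_tmul, rho_tmul, G1_tmul, TensorProduct.tmul_smul, map_smul,
        ←
TensorProduct.smul_tmul', map_smul]
  have h0 : G1 (A.comul x) = 0 := by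
    have h := key (A.comul x)
    rw [← comul_mul_apply, rho_comul, rho_comul, left_eq_add] at h
    exact h
  have epsG1 : ∀ w : B ⊗[K] B,
      A.counit (G1 w) = A.counit (A.mul (lamBB A w ⊗ₜ[K] s)) := by
    intro w
    induction w using TensorProduct.induction_on with
    | zero => simp
    | tmul x₁ x₂ =>
      rw [G1_tmul, lam_tmul, map_smul, ← TensorProduct.smul_tmul', map_smul, map_smul,
        smul_eq_mul, smul_eq_mul, mul_comm]
    | add a b ha hb =>
      rw [map_add, map_add, map_add, ha, hb, TensorProduct.add_tmul, map_add, map_add]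
  have := epsG1 (A.comul x)
  rw [h0, lam_comul, map_zero] at this
  exact this.symm

end Aux4
section Aux5
variable {K : Type*} [Field K] {B : Type*} [AddCommGroup B] [Module K B]
variable {M2 : Type*} [AddCommGroup M2] [Module K M2]

/-- Descend a bilinear-style map `f : B ⊗ B → M2` that kills `I ⊗ B + B ⊗ I`
to the quotient `(B⧸I) ⊗ (B⧸I)`. -/
def qBil (I : Submodule K B) (f : B ⊗[K] B →ₗ[K] M2)
    (h1 : ∀ x : B, ∀ y ∈ I, f (x ⊗ₜ[K] y) = 0)
    (h2 : ∀ x ∈ I, ∀ y : B, f (x ⊗ₜ[K] y) = 0) :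
    (B ⧸ I) ⊗[K] (B ⧸ I) →ₗ[K] M2 :=
  TensorProduct.lift <| Submodule.liftQ I
    { toFun := fun x => Submodule.liftQ I (f ∘ₗ TensorProduct.mk K B B x)
        (fun y hy => by simpa using h1 x y hy)
      map_add' := fun a b => Submodule.linearMap_qext I (by
        ext y
        simp [TensorProduct.add_tmul])
      map_smul' := fun k a => Submodule.linearMap_qext I (by
        ext y
        simp [← TensorProduct.smul_tmul']) }
    (fun x hx => by
      rw [LinearMap.mem_ker]
      refine Submodule.linearMap_qext I ?_
      ext y
      simpa using h2 x hx y)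

lemma qBil_tmul (I : Submodule K B) (f : B ⊗[K] B →ₗ[K] M2) (h1 h2) (x y : B) :
    qBil I f h1 h2 (I.mkQ x ⊗ₜ[K] I.mkQ y) = f (x ⊗ₜ[K] y) := rfl

lemma qBil_comp (I : Submodule K B) (f : B ⊗[K] B →ₗ[K] M2) (h1 h2) :
    qBil I f h1 h2 ∘ₗ TensorProduct.map I.mkQ I.mkQ = f :=
  TensorProduct.ext' fun x y => qBil_tmul I f h1 h2 x y

set_option maxHeartbeats 1000000 in
theorem quotBB_exists (A : BB K B) (I : Submodule K B)
    (hI1 : mulSub K A ⊤ I ≤ I) (hI2 : mulSub K A I ⊤ ≤ I)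
    (hΔ : ∀ x ∈ I, A.comul x ∈ lT K I ⊔ rT K I)
    (hε : I ≤ LinearMap.ker A.counit)
    (hbL : ∀ x ∈ I, ∀ y : B, A.braid (x ⊗ₜ[K] y) ∈ rT K I)
    (hbR : ∀ x ∈ I, ∀ y : B, A.braid (y ⊗ₜ[K] x) ∈ lT K I) :
    ∃ A' : BB K (B ⧸ I), IsBBHom K A A' I.mkQ := by
  set π := I.mkQ with hπ
  have hπ0 : ∀ x ∈ I, π x = 0 := fun x hx => (Submodule.Quotient.mk_eq_zero I).mpr hx
  have hkill : ∀ w ∈ lT K I ⊔ rT K I, TensorProduct.map π π w = 0 := by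
    intro w hw
    obtain ⟨p, hp, q, hq, rfl⟩ := Submodule.mem_sup.mp hw
    rw [map_add]
    have h1 : TensorProduct.map π π p ∈ (⊥ : Submodule K _) := by
      refine lT_induction (TensorProduct.map π π) (fun x hx y => ?_) hp
      rw [Submodule.mem_bot, TensorProduct.map_tmul, hπ0 x hx, TensorProduct.zero_tmul]
    have h2 : TensorProduct.map π π q ∈ (⊥ : Submodule K _) := by
      refine rT_induction (TensorProduct.map π π) (fun x hx y => ?_) hq
      rw [Submodule.mem_bot, TensorProduct.map_tmul, hπ0 x hx, TensorProduct.tmul_zero]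
    rw [(Submodule.mem_bot K).mp h1, (Submodule.mem_bot K).mp h2, add_zero]
  -- structure maps
  set mulW := qBil I (π ∘ₗ A.mul)
    (fun x y hy => by
      simp only [LinearMap.comp_apply]
      exact hπ0 _ (hI1 (mem_mulSub A Submodule.mem_top hy)))
    (fun x hx y => by
      simp only [LinearMap.comp_apply]
      exact hπ0 _ (hI2 (mem_mulSub A hx Submodule.mem_top))) with hmulW
  set braidW := qBil I (TensorProduct.map π π ∘ₗ A.braid)
    (fun x y hy => by
      simp only [LinearMap.comp_apply]
      exact hkill _ (le_sup_left (a := lT K I) (hbR y hy x)))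
    (fun x hx y => by
      simp only [LinearMap.comp_apply]
      exact hkill _ (le_sup_right (b := rT K I) (hbL x hx y))) with hbraidW
  set comulW := Submodule.liftQ I (TensorProduct.map π π ∘ₗ A.comul)
    (fun x hx => by
      rw [LinearMap.mem_ker, LinearMap.comp_apply]
      exact hkill _ (hΔ x hx)) with hcomulW
  set counitW := Submodule.liftQ I A.counit hε with hcounitW
  set unitW := π ∘ₗ A.unit with hunitW
  set W := B ⧸ I with hW
  -- commutation squares
  have hm : mulW ∘ₗ TensorProduct.map π π = π ∘ₗ A.mul := qBil_comp _ _ _ _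
  have hc : braidW ∘ₗ TensorProduct.map π π = TensorProduct.map π π ∘ₗ A.braid :=
    qBil_comp _ _ _ _
  have hd : comulW ∘ₗ π = TensorProduct.map π π ∘ₗ A.comul := Submodule.liftQ_mkQ _ _ _
  have he : counitW ∘ₗ π = A.counit := Submodule.liftQ_mkQ _ _ _
  -- surjectivity
  have hπs : Function.Surjective π := Submodule.mkQ_surjective I
  have hs2 : Function.Surjective ⇑(TensorProduct.map π π) :=
    TensorProduct.map_surjective hπs hπs
  have hs3L : Function.Surjective ⇑(TensorProduct.map (TensorProduct.map π π) π) :=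
    TensorProduct.map_surjective hs2 hπs
  have hs3R : Function.Surjective ⇑(TensorProduct.map π (TensorProduct.map π π)) :=
    TensorProduct.map_surjective hπs hs2
  -- pointwise squares
  have hm' : ∀ u : B ⊗[K] B, mulW (TensorProduct.map π π u) = π (A.mul u) :=
    fun u => by simpa only [LinearMap.comp_apply] using LinearMap.congr_fun hm u
  have hc' : ∀ u : B ⊗[K] B,
      braidW (TensorProduct.map π π u) = TensorProduct.map π π (A.braid u) :=
    fun u => by simpa only [LinearMap.comp_apply] using LinearMap.congr_fun hc u
  have hd' : ∀ x : B, comulW (π x) = TensorProduct.map π π (A.comul x) :=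
    fun x => by simpa only [LinearMap.comp_apply] using LinearMap.congr_fun hd x
  have he' : ∀ x : B, counitW (π x) = A.counit x :=
    fun x => by simpa only [LinearMap.comp_apply] using LinearMap.congr_fun he x
  -- naturality lemmas
  have c1 : rTensor W mulW ∘ₗ TensorProduct.map (TensorProduct.map π π) π
      = TensorProduct.map π π ∘ₗ rTensor B A.mul := by
    rw [rTensor_comp_map, hm, map_comp_rTensor]
  have c2 : lTensor W mulW ∘ₗ TensorProduct.map π (TensorProduct.map π π)
      = TensorProduct.map π π ∘ₗ lTensor B A.mul := by
    rw [lTensor_comp_map, hm, map_comp_lTensor]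
  have c3 : rTensor W braidW ∘ₗ TensorProduct.map (TensorProduct.map π π) π
      = TensorProduct.map (TensorProduct.map π π) π ∘ₗ rTensor B A.braid := by
    rw [rTensor_comp_map, hc, map_comp_rTensor]
  have c4 : lTensor W braidW ∘ₗ TensorProduct.map π (TensorProduct.map π π)
      = TensorProduct.map π (TensorProduct.map π π) ∘ₗ lTensor B A.braid := by
    rw [lTensor_comp_map, hc, map_comp_lTensor]
  have c5 : (TensorProduct.assoc K W W W).toLinearMap
        ∘ₗ TensorProduct.map (TensorProduct.map π π) π
      = TensorProduct.map π (TensorProduct.map π π)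
        ∘ₗ (TensorProduct.assoc K B B B).toLinearMap :=
    (TensorProduct.map_map_comp_assoc_eq π π π).symm
  have c6 : (TensorProduct.assoc K W W W).symm.toLinearMap
        ∘ₗ TensorProduct.map π (TensorProduct.map π π)
      = TensorProduct.map (TensorProduct.map π π) π
        ∘ₗ (TensorProduct.assoc K B B B).symm.toLinearMap :=
    (TensorProduct.map_map_comp_assoc_symm_eq π π π).symm
  have c7 : rTensor W comulW ∘ₗ TensorProduct.map π π
      = TensorProduct.map (TensorProduct.map π π) π ∘ₗ rTensor B A.comul := by
    rw [rTensor_comp_map, hd, map_comp_rTensor]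
  have c8 : lTensor W comulW ∘ₗ TensorProduct.map π π
      = TensorProduct.map π (TensorProduct.map π π) ∘ₗ lTensor B A.comul := by
    rw [lTensor_comp_map, hd, map_comp_lTensor]
  have c1' := fun t => by
    simpa only [LinearMap.comp_apply, LinearEquiv.coe_coe] using LinearMap.congr_fun c1 t
  have c2' := fun t => by
    simpa only [LinearMap.comp_apply, LinearEquiv.coe_coe] using LinearMap.congr_fun c2 t
  have c3' := fun t => by
    simpa only [LinearMap.comp_apply, LinearEquiv.coe_coe] using LinearMap.congr_fun c3 t
  have c4' := fun t => by
    simpa only [LinearMap.comp_apply, LinearEquiv.coe_coe] using LinearMap.congr_fun c4 t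
  have c5' := fun t => by
    simpa only [LinearMap.comp_apply, LinearEquiv.coe_coe] using LinearMap.congr_fun c5 t
  have c6' := fun t => by
    simpa only [LinearMap.comp_apply, LinearEquiv.coe_coe] using LinearMap.congr_fun c6 t
  have c7' := fun t => by
    simpa only [LinearMap.comp_apply, LinearEquiv.coe_coe] using LinearMap.congr_fun c7 t
  have c8' := fun t => by
    simpa only [LinearMap.comp_apply, LinearEquiv.coe_coe] using LinearMap.congr_fun c8 t
  have d1 : TensorProduct.map comulW comulW ∘ₗ TensorProduct.map π π
      = TensorProduct.map (TensorProduct.map π π) (TensorProduct.map π π)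
        ∘ₗ TensorProduct.map A.comul A.comul := by
    rw [← TensorProduct.map_comp, hd, TensorProduct.map_comp]
  have d2 : (TensorProduct.assoc K (W ⊗[K] W) W W).symm.toLinearMap
        ∘ₗ TensorProduct.map (TensorProduct.map π π) (TensorProduct.map π π)
      = TensorProduct.map (TensorProduct.map (TensorProduct.map π π) π) π
        ∘ₗ (TensorProduct.assoc K (B ⊗[K] B) B B).symm.toLinearMap :=
    (TensorProduct.map_map_comp_assoc_symm_eq (TensorProduct.map π π) π π).symm
  have d3 : rTensor W (TensorProduct.assoc K W W W).toLinearMap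
        ∘ₗ TensorProduct.map (TensorProduct.map (TensorProduct.map π π) π) π
      = TensorProduct.map (TensorProduct.map π (TensorProduct.map π π)) π
        ∘ₗ rTensor B (TensorProduct.assoc K B B B).toLinearMap := by
    rw [rTensor_comp_map, c5, map_comp_rTensor]
  have d4 : rTensor W (lTensor W braidW)
        ∘ₗ TensorProduct.map (TensorProduct.map π (TensorProduct.map π π)) π
      = TensorProduct.map (TensorProduct.map π (TensorProduct.map π π)) π
        ∘ₗ rTensor B (lTensor B A.braid) := by
    rw [rTensor_comp_map, c4, map_comp_rTensor]
  have d5 : rTensor W (TensorProduct.assoc K W W W).symm.toLinearMap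
        ∘ₗ TensorProduct.map (TensorProduct.map π (TensorProduct.map π π)) π
      = TensorProduct.map (TensorProduct.map (TensorProduct.map π π) π) π
        ∘ₗ rTensor B (TensorProduct.assoc K B B B).symm.toLinearMap := by
    rw [rTensor_comp_map, c6, map_comp_rTensor]
  have d6 : (TensorProduct.assoc K (W ⊗[K] W) W W).toLinearMap
        ∘ₗ TensorProduct.map (TensorProduct.map (TensorProduct.map π π) π) π
      = TensorProduct.map (TensorProduct.map π π) (TensorProduct.map π π)
        ∘ₗ (TensorProduct.assoc K (B ⊗[K] B) B B).toLinearMap :=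
    (TensorProduct.map_map_comp_assoc_eq (TensorProduct.map π π) π π).symm
  have d7 : TensorProduct.map mulW mulW
        ∘ₗ TensorProduct.map (TensorProduct.map π π) (TensorProduct.map π π)
      = TensorProduct.map π π ∘ₗ TensorProduct.map A.mul A.mul := by
    rw [← TensorProduct.map_comp, hm, TensorProduct.map_comp]
  have d1' := fun t => by
    simpa only [LinearMap.comp_apply, LinearEquiv.coe_coe] using LinearMap.congr_fun d1 t
  have d2' := fun t => by
    simpa only [LinearMap.comp_apply, LinearEquiv.coe_coe] using LinearMap.congr_fun d2 t
  have d3' := fun t => by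
    simpa only [LinearMap.comp_apply, LinearEquiv.coe_coe] using LinearMap.congr_fun d3 t
  have d4' := fun t => by
    simpa only [LinearMap.comp_apply, LinearEquiv.coe_coe] using LinearMap.congr_fun d4 t
  have d5' := fun t => by
    simpa only [LinearMap.comp_apply, LinearEquiv.coe_coe] using LinearMap.congr_fun d5 t
  have d6' := fun t => by
    simpa only [LinearMap.comp_apply, LinearEquiv.coe_coe] using LinearMap.congr_fun d6 t
  have d7' := fun t => by
    simpa only [LinearMap.comp_apply, LinearEquiv.coe_coe] using LinearMap.congr_fun d7 t
  clear_value mulW braidW comulW counitW unitW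
  -- counit compatibility (pointwise)
  have hlid : ∀ u : B ⊗[K] B,
      (TensorProduct.lid K W) (rTensor W counitW (TensorProduct.map π π u))
        = π ((TensorProduct.lid K B) (rTensor B A.counit u)) := by
    intro u
    induction u using TensorProduct.induction_on with
    | zero => simp
    | tmul a b =>
      simp only [TensorProduct.map_tmul, rTensor_tmul, LinearEquiv.coe_coe,
        TensorProduct.lid_tmul, he', map_smul]
    | add a b ha hb => simp only [map_add, ha, hb]
  have hrid : ∀ u : B ⊗[K] B,
      (TensorProduct.rid K W) (lTensor W counitW (TensorProduct.map π π u))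
        = π ((TensorProduct.rid K B) (lTensor B A.counit u)) := by
    intro u
    induction u using TensorProduct.induction_on with
    | zero => simp
    | tmul a b =>
      simp only [TensorProduct.map_tmul, lTensor_tmul, LinearEquiv.coe_coe,
        TensorProduct.rid_tmul, he', map_smul]
    | add a b ha hb => simp only [map_add, ha, hb]
  refine ⟨⟨mulW, unitW, comulW, counitW, braidW, ?_, ?_, ?_, ?_, ?_, ?_, ?_, ?_, ?_, ?_,
    ?_, ?_, ?_, ?_, ?_, ?_⟩, ?_⟩
  · -- mul_assoc'
    refine (LinearMap.cancel_right hs3L).mp (LinearMap.ext fun t => ?_)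
    simp only [LinearMap.comp_apply, LinearEquiv.coe_coe]
    rw [c1' t, hm', c5' t, c2', hm']
    have := LinearMap.congr_fun A.mul_assoc' t
    simp only [LinearMap.comp_apply, LinearEquiv.coe_coe] at this
    rw [this]
  · -- one_mul'
    intro w
    obtain ⟨x, rfl⟩ := hπs w
    rw [hunitW, LinearMap.comp_apply, ← TensorProduct.map_tmul, hm', A.one_mul' x]
  · -- mul_one'
    intro w
    obtain ⟨x, rfl⟩ := hπs w
    rw [hunitW, LinearMap.comp_apply, ← TensorProduct.map_tmul, hm', A.mul_one' x]
  · -- coassoc'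
    refine (LinearMap.cancel_right hπs).mp (LinearMap.ext fun x => ?_)
    simp only [LinearMap.comp_apply, LinearEquiv.coe_coe]
    rw [hd', c7' (A.comul x), c8', c6']
    have := LinearMap.congr_fun A.coassoc' x
    simp only [LinearMap.comp_apply, LinearEquiv.coe_coe] at this
    rw [this]
  · -- counit_comul'
    refine (LinearMap.cancel_right hπs).mp (LinearMap.ext fun x => ?_)
    simp only [LinearMap.comp_apply, LinearEquiv.coe_coe, LinearMap.id_apply]
    rw [hd', hlid (A.comul x)]
    have := LinearMap.congr_fun A.counit_comul' x
    simp only [LinearMap.comp_apply, LinearEquiv.coe_coe, LinearMap.id_apply] at this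
    rw [this]
  · -- comul_counit'
    refine (LinearMap.cancel_right hπs).mp (LinearMap.ext fun x => ?_)
    simp only [LinearMap.comp_apply, LinearEquiv.coe_coe, LinearMap.id_apply]
    rw [hd', hrid (A.comul x)]
    have := LinearMap.congr_fun A.comul_counit' x
    simp only [LinearMap.comp_apply, LinearEquiv.coe_coe, LinearMap.id_apply] at this
    rw [this]
  · -- yang_baxter'
    have hyb := A.yang_baxter'
    unfold YangBaxter at hyb ⊢
    refine (LinearMap.cancel_right hs3L).mp (LinearMap.ext fun t => ?_)
    simp only [LinearMap.comp_apply, LinearEquiv.coe_coe]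
    rw [c3' t, c5', c4', c6', c3']
    have := LinearMap.congr_fun hyb t
    simp only [LinearMap.comp_apply, LinearEquiv.coe_coe] at this
    rw [this, c5', c4', c6', c3', c5', c4', c6']
  · -- braid_mul_left
    refine (LinearMap.cancel_right hs3L).mp (LinearMap.ext fun t => ?_)
    simp only [LinearMap.comp_apply, LinearEquiv.coe_coe]
    rw [c1' t, hc', c5' t, c4', c6', c3', c5', c2']
    have := LinearMap.congr_fun A.braid_mul_left t
    simp only [LinearMap.comp_apply, LinearEquiv.coe_coe] at this
    rw [this]
  · -- braid_mul_right
    refine (LinearMap.cancel_right hs3R).mp (LinearMap.ext fun t => ?_)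
    simp only [LinearMap.comp_apply, LinearEquiv.coe_coe]
    rw [c2' t, hc', c6' t, c3', c5', c4', c6', c1']
    have := LinearMap.congr_fun A.braid_mul_right t
    simp only [LinearMap.comp_apply, LinearEquiv.coe_coe] at this
    rw [this]
  · -- braid_unit_left
    intro w
    obtain ⟨x, rfl⟩ := hπs w
    rw [hunitW, LinearMap.comp_apply, ← TensorProduct.map_tmul, hc', A.braid_unit_left x,
      TensorProduct.map_tmul]
  · -- braid_unit_right
    intro w
    obtain ⟨x, rfl⟩ := hπs w
    rw [hunitW, LinearMap.comp_apply, ← TensorProduct.map_tmul, hc', A.braid_unit_right x,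
      TensorProduct.map_tmul]
  · -- comul_braid_left
    refine (LinearMap.cancel_right hs2).mp (LinearMap.ext fun u => ?_)
    simp only [LinearMap.comp_apply, LinearEquiv.coe_coe]
    rw [hc', c7' (A.braid u), c8' u, c6', c3', c5', c4', c6']
    have := LinearMap.congr_fun A.comul_braid_left u
    simp only [LinearMap.comp_apply, LinearEquiv.coe_coe] at this
    rw [this]
  · -- comul_braid_right
    refine (LinearMap.cancel_right hs2).mp (LinearMap.ext fun u => ?_)
    simp only [LinearMap.comp_apply, LinearEquiv.coe_coe]
    rw [hc', c8' (A.braid u), c7' u, c5', c4', c6', c3', c5']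
    have := LinearMap.congr_fun A.comul_braid_right u
    simp only [LinearMap.comp_apply, LinearEquiv.coe_coe] at this
    rw [this]
  · -- counit_braid_left
    refine (LinearMap.cancel_right hs2).mp (LinearMap.ext fun u => ?_)
    simp only [LinearMap.comp_apply, LinearEquiv.coe_coe]
    rw [hc', hlid (A.braid u)]
    have := LinearMap.congr_fun A.counit_braid_left u
    simp only [LinearMap.comp_apply, LinearEquiv.coe_coe] at this
    rw [this, ← hrid u]
  · -- counit_braid_right
    refine (LinearMap.cancel_right hs2).mp (LinearMap.ext fun u => ?_)
    simp only [LinearMap.comp_apply, LinearEquiv.coe_coe]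
    rw [hc', hrid (A.braid u)]
    have := LinearMap.congr_fun A.counit_braid_right u
    simp only [LinearMap.comp_apply, LinearEquiv.coe_coe] at this
    rw [this, ← hlid u]
  · -- comul_mul'
    refine (LinearMap.cancel_right hs2).mp (LinearMap.ext fun u => ?_)
    simp only [LinearMap.comp_apply, LinearEquiv.coe_coe]
    rw [hm', hd', d1' u, d2', d3', d4', d5', d6', d7']
    have := LinearMap.congr_fun A.comul_mul' u
    simp only [LinearMap.comp_apply, LinearEquiv.coe_coe] at this
    rw [this]


  · exact ⟨hm.symm, hunitW.symm, hd, he, hc⟩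

end Aux5
section Aux6
variable {K : Type*} [Field K] {B : Type*} [AddCommGroup B] [Module K B]
variable {B'' : Type*} [AddCommGroup B''] [Module K B'']

lemma tensor_induction2 {Ma Mb M2 : Type*} [AddCommGroup Ma] [Module K Ma]
    [AddCommGroup Mb] [Module K Mb] [AddCommGroup M2] [Module K M2]
    (F : Ma ⊗[K] Mb →ₗ[K] M2) {Q : Submodule K M2}
    (h : ∀ x y, F (x ⊗ₜ[K] y) ∈ Q) (e : Ma ⊗[K] Mb) : F e ∈ Q := by
  induction e using TensorProduct.induction_on with
  | zero => simpa using Q.zero_mem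
  | tmul x y => exact h x y
  | add a b ha hb => rw [map_add]; exact Q.add_mem ha hb

lemma BB_ext {A1 A2 : BB K B} (h1 : A1.mul = A2.mul) (h2 : A1.unit = A2.unit)
    (h3 : A1.comul = A2.comul) (h4 : A1.counit = A2.counit) (h5 : A1.braid = A2.braid) :
    A1 = A2 := by
  cases A1; cases A2
  simp only at h1 h2 h3 h4 h5
  subst h1; subst h2; subst h3; subst h4; subst h5
  rfl

lemma BBHom_unique {A : BB K B} {A1 A2 : BB K B''} {f : B →ₗ[K] B''}
    (hf : Function.Surjective f)
    (h1 : IsBBHom K A A1 f) (h2 : IsBBHom K A A2 f) : A1 = A2 := by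
  have hf2 : Function.Surjective ⇑(TensorProduct.map f f) :=
    TensorProduct.map_surjective hf hf
  obtain ⟨m1, u1, d1, e1, c1⟩ := h1
  obtain ⟨m2, u2, d2, e2, c2⟩ := h2
  refine BB_ext ?_ ?_ ?_ ?_ ?_
  · exact (LinearMap.cancel_right hf2).mp (m1.symm.trans m2)
  · exact u1.symm.trans u2
  · exact (LinearMap.cancel_right hf).mp (d1.trans d2.symm)
  · exact (LinearMap.cancel_right hf).mp (e1.trans e2.symm)
  · exact (LinearMap.cancel_right hf2).mp (c1.trans c2.symm)

end Aux6
/-- Quotient of a `(V,c)`-bialgebra `(B, γ)` by the braided ideal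
generated by `(Id − γb)(P(B))`.  Here `G = γ(V)`, the induced maps `c_G`, `c_{P,G}`,
`c_{G,P}` are given with their characterizing equations, and `gb : P(B) → G` is the
corestriction of `γ ∘ b` (characterized by `(LinearMap.range γ).subtype ∘ gb = γ ∘ b`). -/
theorem stmt_11 {V B : Type*} [AddCommGroup V] [Module K V] [AddCommGroup B] [Module K B]
    (c : V ⊗[K] V →ₗ[K] V ⊗[K] V) (hc : YangBaxter K V c)
    (A : BB K B) (γ : V →ₗ[K] B) (hVC : IsVCBialgebra K c A γ)
    (cGG : ↥(LinearMap.range γ) ⊗[K] ↥(LinearMap.range γ) →ₗ[K]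
      ↥(LinearMap.range γ) ⊗[K] ↥(LinearMap.range γ))
    (hcGG : TensorProduct.map (LinearMap.range γ).subtype (LinearMap.range γ).subtype ∘ₗ cGG
        = A.braid ∘ₗ TensorProduct.map (LinearMap.range γ).subtype (LinearMap.range γ).subtype)
    (cPG : ↥(Prim K A) ⊗[K] ↥(LinearMap.range γ) →ₗ[K]
      ↥(LinearMap.range γ) ⊗[K] ↥(Prim K A))
    (hcPG : TensorProduct.map (LinearMap.range γ).subtype (Prim K A).subtype ∘ₗ cPG
        = A.braid ∘ₗ TensorProduct.map (Prim K A).subtype (LinearMap.range γ).subtype)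
    (cGP : ↥(LinearMap.range γ) ⊗[K] ↥(Prim K A) →ₗ[K]
      ↥(Prim K A) ⊗[K] ↥(LinearMap.range γ))
    (hcGP : TensorProduct.map (Prim K A).subtype (LinearMap.range γ).subtype ∘ₗ cGP
        = A.braid ∘ₗ TensorProduct.map (LinearMap.range γ).subtype (Prim K A).subtype)
    (b : ↥(Prim K A) →ₗ[K] V)
    (gb : ↥(Prim K A) →ₗ[K] ↥(LinearMap.range γ))
    (hgb : (LinearMap.range γ).subtype ∘ₗ gb = γ ∘ₗ b)
    (hb1 : cGG ∘ₗ rTensor ↥(LinearMap.range γ) gb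
        = lTensor ↥(LinearMap.range γ) gb ∘ₗ cPG)
    (hb2 : cGG ∘ₗ lTensor ↥(LinearMap.range γ) gb
        = rTensor ↥(LinearMap.range γ) gb ∘ₗ cGP) :
    IsBraidedIdeal K A (idealGen K A (LinearMap.range ((Prim K A).subtype - γ ∘ₗ b))) ∧
    (∃! A' : BB K (B ⧸ idealGen K A (LinearMap.range ((Prim K A).subtype - γ ∘ₗ b))),
      IsBBHom K A A'
        (idealGen K A (LinearMap.range ((Prim K A).subtype - γ ∘ₗ b))).mkQ) ∧
    (∀ A' : BB K (B ⧸ idealGen K A (LinearMap.range ((Prim K A).subtype - γ ∘ₗ b))),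
      IsBBHom K A A'
          (idealGen K A (LinearMap.range ((Prim K A).subtype - γ ∘ₗ b))).mkQ →
        IsVCBialgebra K c A'
          ((idealGen K A (LinearMap.range ((Prim K A).subtype - γ ∘ₗ b))).mkQ ∘ₗ γ)) := by

  obtain ⟨hγP, hγc, hγgen⟩ := hVC
  set σ := (Prim K A).subtype - γ ∘ₗ b with hσdef
  set S := LinearMap.range σ with hSdef
  set T := mulSub K A ⊤ S with hTdef
  have hσ_apply : ∀ p : ↥(Prim K A), σ p = (p : B) - γ (b p) := fun p => by
    rw [hσdef]; simp
  have hgb' : ∀ p : ↥(Prim K A), ((gb p : ↥(LinearMap.range γ)) : B) = γ (b p) := fun p => by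
    simpa using LinearMap.congr_fun hgb p
  have hSP : S ≤ Prim K A := by
    rintro x ⟨p, rfl⟩
    rw [hσ_apply]
    exact Submodule.sub_mem _ p.2 (hγP ⟨b p, rfl⟩)
  have hmapσR : ∀ w : ↥(LinearMap.range γ) ⊗[K] ↥(Prim K A),
      TensorProduct.map (LinearMap.range γ).subtype (Prim K A).subtype w
        - TensorProduct.map (LinearMap.range γ).subtype (LinearMap.range γ).subtype (lTensor ↥(LinearMap.range γ) gb w)
        = TensorProduct.map (LinearMap.range γ).subtype σ w := by
    intro w
    induction w using TensorProduct.induction_on with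
    | zero => simp
    | tmul g' p' =>
      simp only [lTensor_tmul, TensorProduct.map_tmul, Submodule.subtype_apply,
        hσ_apply, hgb', TensorProduct.tmul_sub]
    | add a' b' ha hb => simp only [map_add]; rw [← ha, ← hb]; abel
  have hmapσL : ∀ w : ↥(Prim K A) ⊗[K] ↥(LinearMap.range γ),
      TensorProduct.map (Prim K A).subtype (LinearMap.range γ).subtype w
        - TensorProduct.map (LinearMap.range γ).subtype (LinearMap.range γ).subtype (rTensor ↥(LinearMap.range γ) gb w)
        = TensorProduct.map σ (LinearMap.range γ).subtype w := by
    intro w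
    induction w using TensorProduct.induction_on with
    | zero => simp
    | tmul p' g' =>
      simp only [rTensor_tmul, TensorProduct.map_tmul, Submodule.subtype_apply,
        hσ_apply, hgb', TensorProduct.sub_tmul]
    | add a' b' ha hb => simp only [map_add]; rw [← ha, ← hb]; abel
  have claim1 : ∀ (p : ↥(Prim K A)) (g : ↥(LinearMap.range γ)),
      A.braid (σ p ⊗ₜ[K] (g : B)) = TensorProduct.map (LinearMap.range γ).subtype σ (cPG (p ⊗ₜ[K] g)) := by
    intro p g
    have h1 : A.braid ((p : B) ⊗ₜ[K] (g : B))
        = TensorProduct.map (LinearMap.range γ).subtype (Prim K A).subtype (cPG (p ⊗ₜ[K] g)) := by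
      simpa using (LinearMap.congr_fun hcPG (p ⊗ₜ[K] g)).symm
    have h2 : A.braid (γ (b p) ⊗ₜ[K] (g : B))
        = TensorProduct.map (LinearMap.range γ).subtype (LinearMap.range γ).subtype (lTensor ↥(LinearMap.range γ) gb (cPG (p ⊗ₜ[K] g))) := by
      have e1 := LinearMap.congr_fun hcGG (gb p ⊗ₜ[K] g)
      have e2 := LinearMap.congr_fun hb1 (p ⊗ₜ[K] g)
      simp only [LinearMap.comp_apply, TensorProduct.map_tmul, rTensor_tmul,
        Submodule.subtype_apply] at e1 e2
      rw [← hgb' p, ← e1, e2]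
    rw [hσ_apply, TensorProduct.sub_tmul, map_sub, h1, h2, hmapσR]
  have claim2 : ∀ (p : ↥(Prim K A)) (g : ↥(LinearMap.range γ)),
      A.braid ((g : B) ⊗ₜ[K] σ p) = TensorProduct.map σ (LinearMap.range γ).subtype (cGP (g ⊗ₜ[K] p)) := by
    intro p g
    have h1 : A.braid ((g : B) ⊗ₜ[K] (p : B))
        = TensorProduct.map (Prim K A).subtype (LinearMap.range γ).subtype (cGP (g ⊗ₜ[K] p)) := by
      simpa using (LinearMap.congr_fun hcGP (g ⊗ₜ[K] p)).symm
    have h2 : A.braid ((g : B) ⊗ₜ[K] γ (b p))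
        = TensorProduct.map (LinearMap.range γ).subtype (LinearMap.range γ).subtype (rTensor ↥(LinearMap.range γ) gb (cGP (g ⊗ₜ[K] p))) := by
      have e1 := LinearMap.congr_fun hcGG (g ⊗ₜ[K] gb p)
      have e2 := LinearMap.congr_fun hb2 (g ⊗ₜ[K] p)
      simp only [LinearMap.comp_apply, TensorProduct.map_tmul, lTensor_tmul,
        Submodule.subtype_apply] at e1 e2
      rw [← hgb' p, ← e1, e2]
    rw [hσ_apply, TensorProduct.tmul_sub, map_sub, h1, h2, hmapσL]
  have hSG : ∀ s ∈ S, ∀ g ∈ LinearMap.range γ,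
      A.braid (s ⊗ₜ[K] g) ∈ rT K S ∧ A.braid (g ⊗ₜ[K] s) ∈ lT K S := by
    rintro s hs g hg
    obtain ⟨p, rfl⟩ := hs
    constructor
    · rw [show g = ((⟨g, hg⟩ : ↥(LinearMap.range γ)) : B) from rfl, claim1 p (⟨g, hg⟩ : ↥(LinearMap.range γ))]
      exact tensor_induction2 (TensorProduct.map (LinearMap.range γ).subtype σ)
        (fun g' p' => by rw [TensorProduct.map_tmul]; exact mem_rT (show σ p' ∈ S from ⟨p', rfl⟩) _) _
    · rw [show g = ((⟨g, hg⟩ : ↥(LinearMap.range γ)) : B) from rfl, claim2 p (⟨g, hg⟩ : ↥(LinearMap.range γ))]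
      exact tensor_induction2 (TensorProduct.map σ (LinearMap.range γ).subtype)
        (fun p' g' => by rw [TensorProduct.map_tmul]; exact mem_lT (show σ p' ∈ S from ⟨p', rfl⟩) _) _
  have hscat := scat_of_gen A hγgen hSG
  have ScatL : ∀ s ∈ S, ∀ y : B, A.braid (s ⊗ₜ[K] y) ∈ rT K S :=
    fun s hs y => (hscat s hs y).1
  have ScatR : ∀ s ∈ S, ∀ y : B, A.braid (y ⊗ₜ[K] s) ∈ lT K S :=
    fun s hs y => (hscat s hs y).2
  have hrTtop : ∀ e : B ⊗[K] B, e ∈ rT K (⊤ : Submodule K B) := by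
    intro e
    obtain ⟨w, rfl⟩ := LinearMap.lTensor_surjective B
      (g := (⊤ : Submodule K B).subtype) (fun x => ⟨⟨x, trivial⟩, rfl⟩) e
    exact ⟨w, rfl⟩
  have hlTtop : ∀ e : B ⊗[K] B, e ∈ lT K (⊤ : Submodule K B) := by
    intro e
    obtain ⟨w, rfl⟩ := LinearMap.rTensor_surjective B
      (g := (⊤ : Submodule K B).subtype) (fun x => ⟨⟨x, trivial⟩, rfl⟩) e
    exact ⟨w, rfl⟩
  have hTL : ∀ w ∈ T, ∀ y : B, A.braid (w ⊗ₜ[K] y) ∈ rT K T :=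
    lcat_mul A (fun x _ y => hrTtop _) ScatL
  have hTR : ∀ w ∈ T, ∀ y : B, A.braid (y ⊗ₜ[K] w) ∈ lT K T :=
    rcat_mul A (fun x _ y => hlTtop _) ScatR
  have hIL : ∀ w ∈ mulSub K A T ⊤, ∀ y : B,
      A.braid (w ⊗ₜ[K] y) ∈ rT K (mulSub K A T ⊤) :=
    lcat_mul A hTL (fun x _ y => hrTtop _)
  have hIR : ∀ w ∈ mulSub K A T ⊤, ∀ y : B,
      A.braid (y ⊗ₜ[K] w) ∈ lT K (mulSub K A T ⊤) :=
    rcat_mul A hTR (fun x _ y => hlTtop _)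
  have hTmul : ∀ x : B, ∀ t ∈ T, A.mul (x ⊗ₜ[K] t) ∈ T := by
    intro x t ht
    refine mulSub_induction A (A.mul ∘ₗ TensorProduct.mk K B B x) ?_ ht
    intro z _ s hs
    simp only [LinearMap.comp_apply, TensorProduct.mk_apply]
    rw [← mul_assoc_apply]
    exact mem_mulSub A Submodule.mem_top hs
  have hI1 : mulSub K A ⊤ (mulSub K A T ⊤) ≤ mulSub K A T ⊤ := by
    refine mulSub_le A ?_
    intro x _ w hw
    refine mulSub_induction A (A.mul ∘ₗ TensorProduct.mk K B B x) ?_ hw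
    intro t ht y _
    simp only [LinearMap.comp_apply, TensorProduct.mk_apply]
    rw [← mul_assoc_apply]
    exact mem_mulSub A (hTmul x t ht) Submodule.mem_top
  have hI2 : mulSub K A (mulSub K A T ⊤) ⊤ ≤ mulSub K A T ⊤ := by
    refine mulSub_le A ?_
    intro w hw y _
    refine mulSub_induction A (A.mul ∘ₗ (TensorProduct.mk K B B).flip y) ?_ hw
    intro t ht z _
    simp only [LinearMap.comp_apply, TensorProduct.mk_apply, LinearMap.flip_apply]
    rw [mul_assoc_apply]
    exact mem_mulSub A ht Submodule.mem_top
  have hΔS : ∀ s ∈ S, A.comul s ∈ lT K S ⊔ rT K S := by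
    intro s hs
    rw [(mem_prim_iff A).mp (hSP hs)]
    exact Submodule.add_mem _ (Submodule.mem_sup_left (mem_lT hs _))
      (Submodule.mem_sup_right (mem_rT hs _))
  have hΔT : ∀ t ∈ T, A.comul t ∈ lT K T ⊔ rT K T := by
    intro t ht
    refine mulSub_induction A A.comul ?_ ht
    intro x _ s hs
    exact coideal_mul_right A hΔS (fun u hu y => ScatR u hu y) s hs x
  have hΔI : ∀ w ∈ mulSub K A T ⊤,
      A.comul w ∈ lT K (mulSub K A T ⊤) ⊔ rT K (mulSub K A T ⊤) := by
    intro w hw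
    refine mulSub_induction A A.comul ?_ hw
    intro t ht y _
    exact coideal_mul_left A hΔT hTL t ht y
  have hεT : T ≤ LinearMap.ker A.counit :=
    mulSub_le A fun x _ s hs => LinearMap.mem_ker.mpr (counit_mul_prim A x (hSP hs))
  have hεI : mulSub K A T ⊤ ≤ LinearMap.ker A.counit := by
    refine mulSub_le A ?_
    intro t ht y _
    have hker : (⨆ n, powSub K A (LinearMap.range γ) n)
        ≤ LinearMap.ker (A.counit ∘ₗ A.mul ∘ₗ TensorProduct.mk K B B t) := by
      refine iSup_le ?_
      intro n
      cases n with
      | zero =>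
        rintro z ⟨k, rfl⟩
        rw [LinearMap.mem_ker]
        simp only [LinearMap.comp_apply, TensorProduct.mk_apply]
        have hk : A.unit k = k • A.unit 1 := by rw [← map_smul]; simp
        rw [hk, TensorProduct.tmul_smul, map_smul, map_smul]
        have h0 : A.counit (A.mul (t ⊗ₜ[K] A.unit 1)) = 0 := by
          rw [A.mul_one' t]; exact LinearMap.mem_ker.mp (hεT ht)
        rw [h0, smul_zero]
      | succ n =>
        refine mulSub_le A ?_
        intro p _ g hg
        rw [LinearMap.mem_ker]
        simp only [LinearMap.comp_apply, TensorProduct.mk_apply]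
        rw [← mul_assoc_apply]
        exact counit_mul_prim A _ (hγP hg)
    have hy := hker (hγgen ▸ (Submodule.mem_top : y ∈ ⊤))
    rw [LinearMap.mem_ker] at hy ⊢
    simpa using hy
  have hbid : IsBraidedIdeal K A (idealGen K A S) := by
    refine ⟨hI1, hI2, ?_, hεI, ?_⟩
    · rw [Submodule.map_le_iff_le_comap]
      intro w hw
      exact Submodule.mem_comap.mpr (hΔI w hw)
    · rw [IsPreCategorical, Submodule.map_le_iff_le_comap]
      refine sup_le (fun w hw => ?_) (fun w hw => ?_)
      · exact Submodule.mem_comap.mpr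
          (lT_induction A.braid (fun x hx y => Submodule.mem_sup_right (hIL x hx y)) hw)
      · exact Submodule.mem_comap.mpr
          (rT_induction A.braid (fun x hx y => Submodule.mem_sup_left (hIR x hx y)) hw)
  obtain ⟨A', hA'⟩ := quotBB_exists A (idealGen K A S) hI1 hI2 hΔI hεI hIL hIR
  refine ⟨hbid, ⟨A', hA', fun A'' h'' =>
    BBHom_unique (Submodule.mkQ_surjective _) h'' hA'⟩, ?_⟩
  intro A'' h''
  obtain ⟨hm, hu, hd, he, hcb⟩ := h''
  set π := (idealGen K A S).mkQ with hπdef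
  refine ⟨?_, ?_, ?_⟩
  · rintro x ⟨v, rfl⟩
    rw [mem_prim_iff]
    have h1 : A''.comul ((π ∘ₗ γ) v) = TensorProduct.map π π (A.comul (γ v)) := by
      simpa using LinearMap.congr_fun hd (γ v)
    have h2 : A.comul (γ v) = γ v ⊗ₜ[K] A.unit 1 + A.unit 1 ⊗ₜ[K] γ v :=
      (mem_prim_iff A).mp (hγP ⟨v, rfl⟩)
    have h3 : A''.unit 1 = π (A.unit 1) := by
      simpa using (LinearMap.congr_fun hu 1).symm
    rw [h1, h2, map_add, TensorProduct.map_tmul, TensorProduct.map_tmul, h3]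
    rfl
  · apply TensorProduct.ext'
    intro v w
    simp only [LinearMap.comp_apply, TensorProduct.map_tmul]
    have h1 : A''.braid (π (γ v) ⊗ₜ[K] π (γ w))
        = TensorProduct.map π π (A.braid (γ v ⊗ₜ[K] γ w)) := by
      simpa using LinearMap.congr_fun hcb (γ v ⊗ₜ[K] γ w)
    have h2 : A.braid (γ v ⊗ₜ[K] γ w) = TensorProduct.map γ γ (c (v ⊗ₜ[K] w)) := by
      simpa using LinearMap.congr_fun hγc (v ⊗ₜ[K] w)
    rw [h1, h2]
    have h3 : ∀ u : V ⊗[K] V, TensorProduct.map π π (TensorProduct.map γ γ u)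
        = TensorProduct.map (π ∘ₗ γ) (π ∘ₗ γ) u := fun u => by
      rw [TensorProduct.map_comp]; rfl
    exact h3 _
  · have key : ∀ n, Submodule.map π (powSub K A (LinearMap.range γ) n)
        ≤ powSub K A'' (LinearMap.range (π ∘ₗ γ)) n := by
      intro n
      induction n with
      | zero =>
        rintro x ⟨z, ⟨k, rfl⟩, rfl⟩
        exact ⟨k, by simpa using (LinearMap.congr_fun hu k).symm⟩
      | succ n ih =>
        rintro x ⟨z, hz, rfl⟩
        refine mulSub_induction A π ?_ hz
        intro p hp g hg
        have hmp : π (A.mul (p ⊗ₜ[K] g)) = A''.mul (π p ⊗ₜ[K] π g) := by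
          simpa using LinearMap.congr_fun hm (p ⊗ₜ[K] g)
        rw [hmp]
        obtain ⟨v, rfl⟩ := hg
        exact mem_mulSub A'' (ih ⟨p, hp, rfl⟩) (⟨v, rfl⟩ : π (γ v) ∈ LinearMap.range (π ∘ₗ γ))
    refine le_antisymm le_top ?_
    have hmap : Submodule.map π ⊤ = ⊤ := by
      rw [Submodule.map_top, Submodule.range_mkQ]
    calc (⊤ : Submodule K (B ⧸ idealGen K A S)) = Submodule.map π ⊤ := hmap.symm
      _ = Submodule.map π (⨆ n, powSub K A (LinearMap.range γ) n) := by rw [hγgen]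
      _ = ⨆ n, Submodule.map π (powSub K A (LinearMap.range γ) n) := Submodule.map_iSup _ _
      _ ≤ ⨆ n, powSub K A'' (LinearMap.range (π ∘ₗ γ)) n := iSup_mono key
end
end
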